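/- arXiv:2212.00441 — 8 statements merged into one kernel-verified Lean document; each statement's English description precedes it below -/
import Mathlib

section
/- Let E and F be Banach lattices and P ⊆ L(E,F) a subset closed under addition and negation, satisfying the domination property (0 ≤ S ≤ T with T ∈ P implies S ∈ P). If T ∈ L(E,F) has a modulus |T| in L(E,F), then T is a regularly P-operator if and only if |T| ∈ P. -/
open Filter Topology

variable {E F : Type*}
  [NormedAddCommGroup E] [Lattice E] [IsOrderedAddMonoid E] [HasSolidNorm E] [NormedSpace ℝ E] [CompleteSpace E]
  [NormedAddCommGroup F] [Lattice F] [IsOrderedAddMonoid F] [HasSolidNorm F] [NormedSpace ℝ F] [CompleteSpace F]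

/-- A continuous operator is positive if it maps the positive cone into the positive cone. -/
def IsPosOp (T : E →L[ℝ] F) : Prop := ∀ x : E, 0 ≤ x → 0 ≤ T x

/-- The operator order: `S ≤ T` iff `T - S` is positive. -/
def OpLE (S T : E →L[ℝ] F) : Prop := IsPosOp (T - S)

/-- `T` is a regularly `P`-operator: `T = T₁ - T₂` with `T₁, T₂ ∈ P` positive. -/
def IsRegPOp (P : Set (E →L[ℝ] F)) (T : E →L[ℝ] F) : Prop :=
  ∃ T₁ T₂ : E →L[ℝ] F, T₁ ∈ P ∧ T₂ ∈ P ∧ IsPosOp T₁ ∧ IsPosOp T₂ ∧ T = T₁ - T₂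

/-- `M` is the modulus of `T` in `L(E,F)`: the least upper bound of `T` and `-T`
in the operator order. -/
def IsModulusOp (T M : E →L[ℝ] F) : Prop :=
  OpLE T M ∧ OpLE (-T) M ∧ ∀ U : E →L[ℝ] F, OpLE T U → OpLE (-T) U → OpLE M U

private lemma nonneg_of_add_self' {G : Type*} [Lattice G] [AddCommGroup G]
    [CovariantClass G G (· + ·) (· ≤ ·)] {a : G} (h : 0 ≤ a + a) : 0 ≤ a := by
  have h1 : -a ≤ a := by
    have := sub_nonneg.mpr (le_refl (a + a))
    have : (0:G) ≤ a - (-a) := by rwa [sub_neg_eq_add]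
    exact sub_nonneg.mp this
  have h2 : a⁻ ≤ a⁺ := by
    rw [posPart_def, negPart_def]
    exact sup_le_sup_right h1 0
  have h3 : a⁻ = 0 := le_antisymm
    (by rw [← posPart_inf_negPart_eq_zero a]; exact le_inf h2 le_rfl) (negPart_nonneg a)
  calc (0:G) ≤ a⁺ := posPart_nonneg a
    _ = a⁺ - a⁻ := by rw [h3, sub_zero]
    _ = a := posPart_sub_negPart a

/-- If `P`-operators satisfy the domination property and the modulus `|T|` exists in
`L(E,F)`, then `T` is a regularly `P`-operator iff `|T| ∈ P`. -/
theorem regPOp_iff_modulus_mem (P : Set (E →L[ℝ] F))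
    (hadd : ∀ S ∈ P, ∀ T ∈ P, S + T ∈ P) (hneg : ∀ S ∈ P, -S ∈ P)
    (hne : P.Nonempty)
    (hdom : ∀ S T : E →L[ℝ] F, IsPosOp S → OpLE S T → T ∈ P → S ∈ P)
    (T M : E →L[ℝ] F) (hM : IsModulusOp T M) :
    IsRegPOp P T ↔ M ∈ P := by
  obtain ⟨hTM, hTM', hlub⟩ := hM
  have hMpos : IsPosOp M := by
    intro x hx
    have h1 := hTM x hx
    have h2 := hTM' x hx
    simp only [ContinuousLinearMap.sub_apply, ContinuousLinearMap.neg_apply,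
      ContinuousLinearMap.add_apply, sub_neg_eq_add] at h1 h2
    apply nonneg_of_add_self'
    have e : M x - T x + (M x + T x) = M x + M x := by abel
    have := add_nonneg h1 h2
    rwa [e] at this
  constructor
  · rintro ⟨T₁, T₂, hT₁, hT₂, hp₁, hp₂, rfl⟩
    have hS : T₁ + T₂ ∈ P := hadd _ hT₁ _ hT₂
    have hle1 : OpLE (T₁ - T₂) (T₁ + T₂) := by
      intro x hx
      have e : (T₁ + T₂ - (T₁ - T₂)) x = T₂ x + T₂ x := by
        simp [ContinuousLinearMap.sub_apply, ContinuousLinearMap.add_apply]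
      rw [e]
      exact add_nonneg (hp₂ x hx) (hp₂ x hx)
    have hle2 : OpLE (-(T₁ - T₂)) (T₁ + T₂) := by
      intro x hx
      have e : (T₁ + T₂ - -(T₁ - T₂)) x = T₁ x + T₁ x := by
        simp [ContinuousLinearMap.sub_apply, ContinuousLinearMap.add_apply,
          ContinuousLinearMap.neg_apply]; abel
      rw [e]
      exact add_nonneg (hp₁ x hx) (hp₁ x hx)
    exact hdom M (T₁ + T₂) hMpos (hlub _ hle1 hle2) hS
  · intro hMP
    refine ⟨M, M - T, hMP, ?_, hMpos, hTM, by abel⟩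
    refine hdom (M - T) (M + M) ?_ ?_ (hadd _ hMP _ hMP)
    · exact hTM
    · intro x hx
      have e : (M + M - (M - T)) x = (M - -T) x := by
        simp [ContinuousLinearMap.sub_apply, ContinuousLinearMap.add_apply,
          ContinuousLinearMap.neg_apply]
      rw [e]
      exact hTM' x hx
end

section
/- Let E and F be Banach lattices with F Dedekind complete, and let P be a linear subspace of L(E,F) satisfying the domination property. Then the space r-P(E,F) of regularly P-operators is a Dedekind complete vector lattice (under the operator order). -/
open Filter Topology

variable {E F : Type*}
  [NormedAddCommGroup E] [Lattice E] [HasSolidNorm E] [IsOrderedAddMonoid E] [NormedSpace ℝ E] [CompleteSpace E]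
  [NormedAddCommGroup F] [Lattice F] [HasSolidNorm F] [IsOrderedAddMonoid F] [NormedSpace ℝ F] [CompleteSpace F]

lemma opLE_iff {S T : E →L[ℝ] F} : OpLE S T ↔ ∀ x : E, 0 ≤ x → S x ≤ T x := by
  unfold OpLE IsPosOp
  simp [ContinuousLinearMap.sub_apply, sub_nonneg]

/-- Riesz decomposition for lists of pairs. -/
lemma riesz_list (B : Set (E →L[ℝ] F)) :
    ∀ (l : List (E × (E →L[ℝ] F))) (x y : E), 0 ≤ x → 0 ≤ y →
      (∀ p ∈ l, 0 ≤ p.1 ∧ p.2 ∈ B) → (l.map Prod.fst).sum = x + y →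
      ∃ l₁ l₂ : List (E × (E →L[ℝ] F)),
        (∀ p ∈ l₁, 0 ≤ p.1 ∧ p.2 ∈ B) ∧ (∀ p ∈ l₂, 0 ≤ p.1 ∧ p.2 ∈ B) ∧
        (l₁.map Prod.fst).sum = x ∧ (l₂.map Prod.fst).sum = y ∧
        (l.map fun p => p.2 p.1).sum
          = (l₁.map fun p => p.2 p.1).sum + (l₂.map fun p => p.2 p.1).sum := by
  intro l
  induction l with
  | nil =>
    intro x y hx hy _ hsum
    simp only [List.map_nil, List.sum_nil] at hsum
    have hx0 : x = 0 := le_antisymm (by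
      have : x ≤ x + y := le_add_of_nonneg_right hy
      rw [← hsum] at this; exact this) hx
    have hy0 : y = 0 := by
      have := hsum; rw [hx0, zero_add] at this; exact this.symm
    exact ⟨[], [], by simp, by simp, by simp [hx0], by simp [hy0], by simp⟩
  | cons p t ih =>
    intro x y hx hy hmem hsum
    obtain ⟨c, S⟩ := p
    have hc : 0 ≤ c := (hmem _ List.mem_cons_self).1
    have hS : S ∈ B := (hmem _ List.mem_cons_self).2
    have hmem' : ∀ q ∈ t, 0 ≤ q.1 ∧ q.2 ∈ B := fun q hq => hmem q (List.mem_cons_of_mem _ hq)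
    simp only [List.map_cons, List.sum_cons] at hsum
    set s := (t.map Prod.fst).sum with hs
    have hsnn : 0 ≤ s := List.sum_nonneg (by
      intro a ha
      obtain ⟨q, hq, rfl⟩ := List.mem_map.mp ha
      exact (hmem' q hq).1)
    set a := c ⊓ x with ha
    have ha0 : 0 ≤ a := le_inf hc hx
    have hax : a ≤ x := inf_le_right
    have hac : a ≤ c := inf_le_left
    set b := c - a with hb
    have hb0 : 0 ≤ b := sub_nonneg.mpr hac
    have hby : b ≤ y := by
      have hcxy : c ≤ x + y := by
        calc c ≤ c + s := le_add_of_nonneg_right hsnn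
        _ = x + y := hsum
      have hb' : b = 0 ⊔ (c - x) := by rw [hb, ha, sub_inf]; simp
      rw [hb']
      exact sup_le hy (sub_le_iff_le_add.mpr (by rwa [add_comm] at hcxy))
    have hsum' : s = (x - a) + (y - b) := by
      have h2 : a + b = c := by rw [hb]; abel
      calc s = (x + y) - c := by rw [← hsum]; abel
      _ = (x + y) - (a + b) := by rw [h2]
      _ = (x - a) + (y - b) := by abel
    obtain ⟨l₁, l₂, h₁mem, h₂mem, h₁sum, h₂sum, hval⟩ :=
      ih (x - a) (y - b) (sub_nonneg.mpr hax) (sub_nonneg.mpr hby) hmem' hsum'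
    refine ⟨(a, S) :: l₁, (b, S) :: l₂, ?_, ?_, ?_, ?_, ?_⟩
    · intro q hq
      rcases List.mem_cons.mp hq with h | h
      · subst h; exact ⟨ha0, hS⟩
      · exact h₁mem q h
    · intro q hq
      rcases List.mem_cons.mp hq with h | h
      · subst h; exact ⟨hb0, hS⟩
      · exact h₂mem q h
    · simp only [List.map_cons, List.sum_cons, h₁sum]; abel
    · simp only [List.map_cons, List.sum_cons, h₂sum]; abel
    · simp only [List.map_cons, List.sum_cons, hval]
      have hSc : S c = S a + S b := by
        rw [← map_add]; congr 1; rw [hb]; abel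
      rw [hSc]; abel

lemma sum_le_of_opLE (Bs : Set (E →L[ℝ] F)) (W : E →L[ℝ] F) (hW : ∀ S ∈ Bs, OpLE S W) :
    ∀ l : List (E × (E →L[ℝ] F)), (∀ p ∈ l, 0 ≤ p.1 ∧ p.2 ∈ Bs) →
      (l.map fun p => p.2 p.1).sum ≤ W ((l.map Prod.fst).sum) := by
  intro l
  induction l with
  | nil => intro _; simp
  | cons p t ih =>
    intro h
    have hp := h p List.mem_cons_self
    have ht : ∀ q ∈ t, 0 ≤ q.1 ∧ q.2 ∈ Bs := fun q hq => h q (List.mem_cons_of_mem _ hq)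
    simp only [List.map_cons, List.sum_cons, map_add]
    exact add_le_add (opLE_iff.mp (hW p.2 hp.2) p.1 hp.1) (ih ht)

/-- Key lemma: the Riesz–Kantorovich supremum of a set of operators containing `0` and bounded
above by a positive operator exists as a continuous linear operator. -/
lemma key_sup (hF : ∀ A : Set F, A.Nonempty → BddAbove A → ∃ s, IsLUB A s)
    (B : Set (E →L[ℝ] F)) (h0 : (0 : E →L[ℝ] F) ∈ B)
    (V : E →L[ℝ] F) (hVpos : IsPosOp V) (hV : ∀ S ∈ B, OpLE S V) :
    ∃ M : E →L[ℝ] F, IsPosOp M ∧ (∀ S ∈ B, OpLE S M) ∧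
      ∀ W : E →L[ℝ] F, (∀ S ∈ B, OpLE S W) → OpLE M W := by
  classical
  set D : E → Set F := fun x => { y | ∃ l : List (E × (E →L[ℝ] F)),
    (∀ p ∈ l, 0 ≤ p.1 ∧ p.2 ∈ B) ∧ (l.map Prod.fst).sum = x ∧
    (l.map fun p => p.2 p.1).sum = y } with hD
  have hmemD : ∀ (S) (_ : S ∈ B) (x : E), 0 ≤ x → S x ∈ D x := by
    intro S hS x hx
    exact ⟨[(x, S)], by simp [hx, hS], by simp, by simp⟩
  have hDle : ∀ (W : E →L[ℝ] F), (∀ S ∈ B, OpLE S W) → ∀ x : E, ∀ y ∈ D x, y ≤ W x := by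
    intro W hW x y hy
    obtain ⟨l, hl, hlx, hly⟩ := hy
    subst hlx; subst hly
    exact sum_le_of_opLE B W hW l hl
  have hDadd : ∀ (x y : E) (v₁ v₂ : F), v₁ ∈ D x → v₂ ∈ D y → v₁ + v₂ ∈ D (x + y) := by
    intro x y v₁ v₂ h₁ h₂
    obtain ⟨l₁, hl₁, hx₁, hv₁⟩ := h₁
    obtain ⟨l₂, hl₂, hx₂, hv₂⟩ := h₂
    refine ⟨l₁ ++ l₂, ?_, ?_, ?_⟩
    · intro q hq
      rcases List.mem_append.mp hq with h | h
      · exact hl₁ q h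
      · exact hl₂ q h
    · rw [List.map_append, List.sum_append, hx₁, hx₂]
    · rw [List.map_append, List.sum_append, hv₁, hv₂]
  have h0mem : ∀ x : E, 0 ≤ x → (0 : F) ∈ D x := by
    intro x hx
    have := hmemD 0 h0 x hx
    simpa using this
  have hbdd : ∀ x : E, 0 ≤ x → ∃ s, IsLUB (D x) s := by
    intro x hx
    exact hF _ ⟨0, h0mem x hx⟩ ⟨V x, fun y hy => hDle V hV x y hy⟩
  choose! m hm using hbdd
  have mnonneg : ∀ x : E, 0 ≤ x → 0 ≤ m x := fun x hx => (hm x hx).1 (h0mem x hx)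
  have mub : ∀ (S) (_ : S ∈ B) (x : E), 0 ≤ x → S x ≤ m x :=
    fun S hS x hx => (hm x hx).1 (hmemD S hS x hx)
  have mle : ∀ (W : E →L[ℝ] F), (∀ S ∈ B, OpLE S W) → ∀ x : E, 0 ≤ x → m x ≤ W x := by
    intro W hW x hx
    exact (hm x hx).2 (fun y hy => hDle W hW x y hy)
  have madd : ∀ x y : E, 0 ≤ x → 0 ≤ y → m (x + y) = m x + m y := by
    intro x y hx hy
    refine le_antisymm ?_ ?_
    · refine (hm (x + y) (add_nonneg hx hy)).2 ?_
      rintro z ⟨l, hl, hsum, hval⟩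
      obtain ⟨l₁, l₂, h₁mem, h₂mem, h₁sum, h₂sum, hveq⟩ := riesz_list B l x y hx hy hl hsum
      have hz : z = (l₁.map fun p => p.2 p.1).sum + (l₂.map fun p => p.2 p.1).sum := by
        rw [← hveq, hval]
      rw [hz]
      exact add_le_add ((hm x hx).1 ⟨l₁, h₁mem, h₁sum, rfl⟩)
        ((hm y hy).1 ⟨l₂, h₂mem, h₂sum, rfl⟩)
    · have h1 : m x ≤ m (x + y) - m y := by
        refine (hm x hx).2 ?_
        intro v₁ hv₁
        have h2 : m y ≤ m (x + y) - v₁ := by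
          refine (hm y hy).2 ?_
          intro v₂ hv₂
          exact le_sub_iff_add_le'.mpr
            ((hm (x + y) (add_nonneg hx hy)).1 (hDadd x y v₁ v₂ hv₁ hv₂))
        exact le_sub_iff_add_le.mpr (le_sub_iff_add_le'.mp h2)
      exact le_sub_iff_add_le.mp h1
  have m0 : m 0 = 0 := by
    have h := madd 0 0 le_rfl le_rfl
    rw [add_zero] at h
    exact right_eq_add.mp h
  set g : E → F := fun x => m x⁺ - m x⁻ with hg
  have gadd : ∀ x y : E, g (x + y) = g x + g y := by
    intro x y
    have hid : (x + y)⁺ + (x⁻ + y⁻) = (x + y)⁻ + (x⁺ + y⁺) := by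
      have h1 : (x + y)⁺ - (x + y)⁻ = (x⁺ + y⁺) - (x⁻ + y⁻) := by
        rw [posPart_sub_negPart]
        have hx' := posPart_sub_negPart x
        have hy' := posPart_sub_negPart y
        calc x + y = (x⁺ - x⁻) + (y⁺ - y⁻) := by rw [hx', hy']
        _ = (x⁺ + y⁺) - (x⁻ + y⁻) := by abel
      have := sub_eq_sub_iff_add_eq_add.mp h1
      rw [this]; abel
    have hkey : m ((x + y)⁺) + (m x⁻ + m y⁻) = m ((x + y)⁻) + (m x⁺ + m y⁺) := by
      rw [← madd _ _ (posPart_nonneg x) (posPart_nonneg y),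
        ← madd _ _ (negPart_nonneg x) (negPart_nonneg y),
        ← madd _ _ (posPart_nonneg (x + y)) (add_nonneg (negPart_nonneg x) (negPart_nonneg y)),
        ← madd _ _ (negPart_nonneg (x + y)) (add_nonneg (posPart_nonneg x) (posPart_nonneg y)),
        hid]
    have hkey2 : m ((x + y)⁺) - m ((x + y)⁻) = (m x⁺ + m y⁺) - (m x⁻ + m y⁻) :=
      sub_eq_sub_iff_add_eq_add.mpr (hkey.trans (by abel))
    show m (x + y)⁺ - m (x + y)⁻ = (m x⁺ - m x⁻) + (m y⁺ - m y⁻)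
    rw [hkey2]; abel
  have gpos : ∀ x : E, 0 ≤ x → g x = m x := by
    intro x hx
    show m x⁺ - m x⁻ = m x
    rw [posPart_eq_self.mpr hx, negPart_eq_zero.mpr hx, m0, sub_zero]
  have hnormpos : ∀ z : E, 0 ≤ z → ‖m z‖ ≤ ‖V‖ * ‖z‖ := by
    intro z hz
    have h1 : |m z| ≤ |V z| := by
      rw [abs_of_nonneg (mnonneg z hz), abs_of_nonneg (hVpos z hz)]
      exact mle V hV z hz
    calc ‖m z‖ ≤ ‖V z‖ := norm_le_norm_of_abs_le_abs h1
    _ ≤ ‖V‖ * ‖z‖ := V.le_opNorm z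
  have hpartnorm : ∀ x : E, ‖x⁺‖ ≤ ‖x‖ ∧ ‖x⁻‖ ≤ ‖x‖ := by
    intro x
    have h1 : x⁺ ≤ |x| := by
      rw [← posPart_add_negPart x]; exact le_add_of_nonneg_right (negPart_nonneg x)
    have h2 : x⁻ ≤ |x| := by
      rw [← posPart_add_negPart x]; exact le_add_of_nonneg_left (posPart_nonneg x)
    constructor
    · have : |x⁺| ≤ |x| := by rwa [abs_of_nonneg (posPart_nonneg x)]
      simpa using norm_le_norm_of_abs_le_abs (by simpa using this)
    · have : |x⁻| ≤ |x| := by rwa [abs_of_nonneg (negPart_nonneg x)]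
      simpa using norm_le_norm_of_abs_le_abs (by simpa using this)
  have gbound : ∀ x : E, ‖g x‖ ≤ (2 * ‖V‖) * ‖x‖ := by
    intro x
    have h1 := hnormpos x⁺ (posPart_nonneg x)
    have h2 := hnormpos x⁻ (negPart_nonneg x)
    have h3 := (hpartnorm x).1
    have h4 := (hpartnorm x).2
    have hVnn : 0 ≤ ‖V‖ := norm_nonneg V
    calc ‖g x‖ ≤ ‖m x⁺‖ + ‖m x⁻‖ := norm_sub_le _ _
    _ ≤ ‖V‖ * ‖x⁺‖ + ‖V‖ * ‖x⁻‖ := add_le_add h1 h2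
    _ ≤ ‖V‖ * ‖x‖ + ‖V‖ * ‖x‖ := by
        exact add_le_add (mul_le_mul_of_nonneg_left h3 hVnn) (mul_le_mul_of_nonneg_left h4 hVnn)
    _ = (2 * ‖V‖) * ‖x‖ := by ring
  set gh : E →+ F := AddMonoidHom.mk' g gadd with hgh
  have gcont : Continuous gh := AddMonoidHomClass.continuous_of_bound gh (2 * ‖V‖) gbound
  set M : E →L[ℝ] F := gh.toRealLinearMap gcont with hM
  have hMapp : ∀ x : E, M x = g x := fun x => rfl
  refine ⟨M, ?_, ?_, ?_⟩
  · intro x hx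
    rw [hMapp, gpos x hx]
    exact mnonneg x hx
  · intro S hS
    rw [opLE_iff]
    intro x hx
    rw [hMapp, gpos x hx]
    exact mub S hS x hx
  · intro W hW
    rw [opLE_iff]
    intro x hx
    rw [hMapp, gpos x hx]
    exact mle W hW x hx

/-- If `F` is Dedekind complete and `P` is a subspace of `L(E,F)` satisfying the
domination property, then the space of regularly `P`-operators is a Dedekind complete
vector lattice under the operator order: pairs have least upper bounds in it, and every
nonempty subset which is bounded above in it has a least upper bound in it. -/
theorem regPOp_dedekindComplete_vectorLattice (P : Submodule ℝ (E →L[ℝ] F))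
    (hdom : ∀ S T : E →L[ℝ] F, IsPosOp S → OpLE S T → T ∈ P → S ∈ P)
    (hF : ∀ A : Set F, A.Nonempty → BddAbove A → ∃ s, IsLUB A s) :
    (∀ S, IsRegPOp (P : Set (E →L[ℝ] F)) S → ∀ T, IsRegPOp (P : Set (E →L[ℝ] F)) T →
      ∃ M, IsRegPOp (P : Set (E →L[ℝ] F)) M ∧ OpLE S M ∧ OpLE T M ∧
        ∀ U, IsRegPOp (P : Set (E →L[ℝ] F)) U → OpLE S U → OpLE T U → OpLE M U) ∧
    (∀ A : Set (E →L[ℝ] F), (∀ S ∈ A, IsRegPOp (P : Set (E →L[ℝ] F)) S) → A.Nonempty →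
      (∃ U, IsRegPOp (P : Set (E →L[ℝ] F)) U ∧ ∀ S ∈ A, OpLE S U) →
      ∃ M, IsRegPOp (P : Set (E →L[ℝ] F)) M ∧ (∀ S ∈ A, OpLE S M) ∧
        ∀ U, IsRegPOp (P : Set (E →L[ℝ] F)) U → (∀ S ∈ A, OpLE S U) → OpLE M U) := by
  -- The general bounded-subset statement.
  have main : ∀ A : Set (E →L[ℝ] F), (∀ S ∈ A, IsRegPOp (P : Set (E →L[ℝ] F)) S) → A.Nonempty →
      (∃ U, IsRegPOp (P : Set (E →L[ℝ] F)) U ∧ ∀ S ∈ A, OpLE S U) →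
      ∃ M, IsRegPOp (P : Set (E →L[ℝ] F)) M ∧ (∀ S ∈ A, OpLE S M) ∧
        ∀ U : E →L[ℝ] F, (∀ S ∈ A, OpLE S U) → OpLE M U := by
    intro A hA ⟨S₀, hS₀A⟩ ⟨U, hUreg, hUub⟩
    obtain ⟨S₁, S₂, hS₁P, hS₂P, hS₁pos, hS₂pos, hS₀eq⟩ := hA S₀ hS₀A
    obtain ⟨U₁, U₂, hU₁P, hU₂P, hU₁pos, hU₂pos, hUeq⟩ := hUreg
    set B : Set (E →L[ℝ] F) := ((fun T => T - S₀) '' A) ∪ {0} with hB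
    set V : E →L[ℝ] F := U₁ + S₂ with hV
    have hVpos : IsPosOp V := by
      intro x hx
      have := add_nonneg (hU₁pos x hx) (hS₂pos x hx)
      simpa [hV, ContinuousLinearMap.add_apply] using this
    have hVub : ∀ S ∈ B, OpLE S V := by
      intro S hS
      rcases hS with ⟨T, hT, rfl⟩ | hS
      · rw [opLE_iff]
        intro x hx
        have h1 : T x ≤ U x := opLE_iff.mp (hUub T hT) x hx
        have h2 : U x = U₁ x - U₂ x := by rw [hUeq]; simp
        have h3 : S₀ x = S₁ x - S₂ x := by rw [hS₀eq]; simp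
        have h4 : 0 ≤ U₂ x := hU₂pos x hx
        have h5 : 0 ≤ S₁ x := hS₁pos x hx
        simp only [ContinuousLinearMap.sub_apply, hV, ContinuousLinearMap.add_apply]
        have := h1
        rw [h2] at this
        rw [h3]
        have goal : T x - (S₁ x - S₂ x) ≤ U₁ x + S₂ x := by
          have : T x ≤ U₁ x := le_trans h1 (by rw [h2]; exact sub_le_self _ h4)
          calc T x - (S₁ x - S₂ x) = (T x - S₁ x) + S₂ x := by abel
          _ ≤ (U₁ x - 0) + S₂ x := by
              exact add_le_add (sub_le_sub this h5) le_rfl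
          _ = U₁ x + S₂ x := by rw [sub_zero]
        exact goal
      · simp only [Set.mem_singleton_iff] at hS
        subst hS
        rw [opLE_iff]
        intro x hx
        simpa using hVpos x hx
    have h0B : (0 : E →L[ℝ] F) ∈ B := Or.inr rfl
    obtain ⟨M₀, hM₀pos, hM₀ub, hM₀least⟩ := key_sup hF B h0B V hVpos hVub
    set M : E →L[ℝ] F := M₀ + S₀ with hM
    have hMub : ∀ S ∈ A, OpLE S M := by
      intro S hS
      rw [opLE_iff]
      intro x hx
      have := opLE_iff.mp (hM₀ub (S - S₀) (Or.inl ⟨S, hS, rfl⟩)) x hx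
      simp only [ContinuousLinearMap.sub_apply] at this
      simp only [hM, ContinuousLinearMap.add_apply]
      exact sub_le_iff_le_add.mp this
    have hMleast : ∀ U' : E →L[ℝ] F, (∀ S ∈ A, OpLE S U') → OpLE M U' := by
      intro U' hU'
      have hub : ∀ S ∈ B, OpLE S (U' - S₀) := by
        intro S hS
        rcases hS with ⟨T, hT, rfl⟩ | hS
        · rw [opLE_iff]
          intro x hx
          have := opLE_iff.mp (hU' T hT) x hx
          simp only [ContinuousLinearMap.sub_apply]
          exact sub_le_sub_right this _
        · simp only [Set.mem_singleton_iff] at hS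
          subst hS
          rw [opLE_iff]
          intro x hx
          have := opLE_iff.mp (hU' S₀ hS₀A) x hx
          simp only [ContinuousLinearMap.sub_apply, ContinuousLinearMap.zero_apply]
          exact sub_nonneg.mpr this
      have := opLE_iff.mp (hM₀least (U' - S₀) hub)
      rw [opLE_iff]
      intro x hx
      have h := this x hx
      simp only [ContinuousLinearMap.sub_apply] at h
      simp only [hM, ContinuousLinearMap.add_apply]
      exact le_sub_iff_add_le.mp h
    have hMreg : IsRegPOp (P : Set (E →L[ℝ] F)) M := by
      have hMS₂pos : IsPosOp (M + S₂) := by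
        intro x hx
        have h1 : 0 ≤ M₀ x := hM₀pos x hx
        have h3 : S₀ x = S₁ x - S₂ x := by rw [hS₀eq]; simp
        have h5 : 0 ≤ S₁ x := hS₁pos x hx
        simp only [ContinuousLinearMap.add_apply, hM]
        rw [h3]
        calc (0 : F) ≤ M₀ x + S₁ x := add_nonneg h1 h5
        _ = M₀ x + (S₁ x - S₂ x) + S₂ x := by abel
      have hMS₂le : OpLE (M + S₂) (U₁ + S₂) := by
        rw [opLE_iff]
        intro x hx
        have h1 := opLE_iff.mp (hM₀least (U - S₀) (by
          intro S hS
          rcases hS with ⟨T, hT, rfl⟩ | hS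
          · rw [opLE_iff]
            intro z hz
            have := opLE_iff.mp (hUub T hT) z hz
            simp only [ContinuousLinearMap.sub_apply]
            exact sub_le_sub_right this _
          · simp only [Set.mem_singleton_iff] at hS
            subst hS
            rw [opLE_iff]
            intro z hz
            have := opLE_iff.mp (hUub S₀ hS₀A) z hz
            simp only [ContinuousLinearMap.sub_apply, ContinuousLinearMap.zero_apply]
            exact sub_nonneg.mpr this)) x hx
        simp only [ContinuousLinearMap.sub_apply] at h1
        have h2 : U x = U₁ x - U₂ x := by rw [hUeq]; simp
        have h4 : 0 ≤ U₂ x := hU₂pos x hx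
        simp only [ContinuousLinearMap.add_apply, hM]
        rw [h2] at h1
        have h6 : M₀ x + S₀ x ≤ U₁ x - U₂ x := le_sub_iff_add_le.mp h1
        have h7 : U₁ x - U₂ x ≤ U₁ x := sub_le_self _ h4
        exact add_le_add (h6.trans h7) le_rfl
      have hUPS : U₁ + S₂ ∈ P := P.add_mem hU₁P hS₂P
      have hMS₂P : M + S₂ ∈ P := hdom (M + S₂) (U₁ + S₂) hMS₂pos hMS₂le hUPS
      exact ⟨M + S₂, S₂, hMS₂P, hS₂P, hMS₂pos, hS₂pos, by abel⟩
    exact ⟨M, hMreg, hMub, hMleast⟩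
  constructor
  · intro S hS T hT
    obtain ⟨S₁, S₂, hS₁P, hS₂P, hS₁pos, hS₂pos, hSeq⟩ := hS
    obtain ⟨T₁, T₂, hT₁P, hT₂P, hT₁pos, hT₂pos, hTeq⟩ := hT
    have hUreg : IsRegPOp (P : Set (E →L[ℝ] F)) (S₁ + T₁) :=
      ⟨S₁ + T₁, 0, P.add_mem hS₁P hT₁P, P.zero_mem,
        fun x hx => by
          simpa [ContinuousLinearMap.add_apply] using
            add_nonneg (hS₁pos x hx) (hT₁pos x hx),
        fun x hx => by simp, by simp⟩
    have hSle : OpLE S (S₁ + T₁) := by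
      rw [opLE_iff]
      intro x hx
      have h1 : S x = S₁ x - S₂ x := by rw [hSeq]; simp
      have h2 : 0 ≤ S₂ x := hS₂pos x hx
      have h3 : 0 ≤ T₁ x := hT₁pos x hx
      simp only [ContinuousLinearMap.add_apply]
      rw [h1]
      calc S₁ x - S₂ x ≤ S₁ x := sub_le_self _ h2
      _ ≤ S₁ x + T₁ x := le_add_of_nonneg_right h3
    have hTle : OpLE T (S₁ + T₁) := by
      rw [opLE_iff]
      intro x hx
      have h1 : T x = T₁ x - T₂ x := by rw [hTeq]; simp
      have h2 : 0 ≤ T₂ x := hT₂pos x hx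
      have h3 : 0 ≤ S₁ x := hS₁pos x hx
      simp only [ContinuousLinearMap.add_apply]
      rw [h1]
      calc T₁ x - T₂ x ≤ T₁ x := sub_le_self _ h2
      _ ≤ S₁ x + T₁ x := le_add_of_nonneg_left h3
    obtain ⟨M, hMreg, hMub, hMleast⟩ := main {S, T}
      (by rintro S' (rfl | rfl); exacts [⟨S₁, S₂, hS₁P, hS₂P, hS₁pos, hS₂pos, hSeq⟩,
        ⟨T₁, T₂, hT₁P, hT₂P, hT₁pos, hT₂pos, hTeq⟩])
      ⟨S, Or.inl rfl⟩
      ⟨S₁ + T₁, hUreg, by rintro S' (rfl | rfl); exacts [hSle, hTle]⟩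
    refine ⟨M, hMreg, hMub S (Or.inl rfl), hMub T (Or.inr rfl), ?_⟩
    intro U hUreg' hSU hTU
    exact hMleast U (by rintro S' (rfl | rfl); exacts [hSU, hTU])
  · intro A hA hne hbdd
    obtain ⟨M, hMreg, hMub, hMleast⟩ := main A hA hne hbdd
    exact ⟨M, hMreg, hMub, fun U hUreg hU => hMleast U hU⟩
end

section
/- Let E, F be Banach lattices, P a linear subspace of L(E,F), and T a regularly P-operator. Then inf{‖S‖ : S ∈ P, -S ≤ T ≤ S} = inf{‖S‖ : S ∈ P, |Tx| ≤ S|x| for all x ∈ E}. -/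
open Filter Topology

variable {E F : Type*}
  [NormedAddCommGroup E] [Lattice E] [IsOrderedAddMonoid E] [HasSolidNorm E] [NormedSpace ℝ E] [CompleteSpace E]
  [NormedAddCommGroup F] [Lattice F] [IsOrderedAddMonoid F] [HasSolidNorm F] [NormedSpace ℝ F] [CompleteSpace F]

/-- For a regularly `P`-operator `T`,
`inf {‖S‖ : S ∈ P, -S ≤ T ≤ S} = inf {‖S‖ : S ∈ P, |Tx| ≤ S|x| for all x}`. -/
theorem envNorm_eq_pointwise_formula (P : Submodule ℝ (E →L[ℝ] F)) (T : E →L[ℝ] F)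
    (hT : IsRegPOp (P : Set (E →L[ℝ] F)) T) :
    sInf {c : ℝ | ∃ S ∈ P, OpLE (-S) T ∧ OpLE T S ∧ c = ‖S‖} =
      sInf {c : ℝ | ∃ S ∈ P, (∀ x : E, |T x| ≤ S |x|) ∧ c = ‖S‖} := by
  congr 1
  ext c
  simp only [Set.mem_setOf_eq]
  constructor
  · rintro ⟨S, hSP, h1, h2, rfl⟩
    refine ⟨S, hSP, fun x => ?_, rfl⟩
    have hp : (0:E) ≤ x⁺ := posPart_nonneg x
    have hn : (0:E) ≤ x⁻ := negPart_nonneg x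
    have e1 : T x⁺ ≤ S x⁺ := by
      have h := h2 x⁺ hp
      simpa [OpLE, ContinuousLinearMap.sub_apply, sub_nonneg] using h
    have e1' : -(T x⁺) ≤ S x⁺ := by
      have h := h1 x⁺ hp
      simp only [OpLE, IsPosOp, ContinuousLinearMap.sub_apply,
        ContinuousLinearMap.neg_apply, sub_neg_eq_add] at h
      exact neg_le_iff_add_nonneg'.mpr h
    have e2 : T x⁻ ≤ S x⁻ := by
      have h := h2 x⁻ hn
      simpa [OpLE, ContinuousLinearMap.sub_apply, sub_nonneg] using h
    have e2' : -(T x⁻) ≤ S x⁻ := by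
      have h := h1 x⁻ hn
      simp only [OpLE, IsPosOp, ContinuousLinearMap.sub_apply,
        ContinuousLinearMap.neg_apply, sub_neg_eq_add] at h
      exact neg_le_iff_add_nonneg'.mpr h
    have hx : T x = T x⁺ - T x⁻ := by rw [← map_sub, posPart_sub_negPart]
    have habs : S |x| = S x⁺ + S x⁻ := by rw [← map_add, posPart_add_negPart]
    rw [abs_le', hx, habs]
    constructor
    · calc T x⁺ - T x⁻ = T x⁺ + -(T x⁻) := sub_eq_add_neg _ _
        _ ≤ S x⁺ + S x⁻ := add_le_add e1 e2'
    · calc -(T x⁺ - T x⁻) = -(T x⁺) + T x⁻ := by rw [neg_sub, sub_eq_add_neg, add_comm]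
        _ ≤ S x⁺ + S x⁻ := add_le_add e1' e2
  · rintro ⟨S, hSP, h, rfl⟩
    have key : ∀ x : E, 0 ≤ x → T x ≤ S x ∧ -(T x) ≤ S x := by
      intro x hx
      have h' := h x
      rw [abs_of_nonneg hx, abs_le'] at h'
      exact h'
    refine ⟨S, hSP, ?_, ?_, rfl⟩
    · intro x hx
      simp only [IsPosOp, ContinuousLinearMap.sub_apply,
        ContinuousLinearMap.neg_apply, sub_neg_eq_add]
      exact neg_le_iff_add_nonneg'.mp (key x hx).2
    · intro x hx
      simp only [IsPosOp, ContinuousLinearMap.sub_apply, sub_nonneg]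
      exact (key x hx).1
end

section
/- Let E, F be Banach lattices with dim L(E,F) > 1. Then there exists a one-dimensional subspace P of L(E,F) such that r-P(E,F) is a proper subspace of P_r(E,F), the set of regular operators belonging to P. In fact one can choose P so that r-P(E,F) = {0} while P_r(E,F) = P. -/
open Filter Topology

section Auxiliary

variable {X : Type*} [NormedAddCommGroup X] [Lattice X] [HasSolidNorm X] [IsOrderedAddMonoid X] [NormedSpace ℝ X]

omit [NormedSpace ℝ X] in
/-- If `a` is disjoint from `b` and from `c` (all nonnegative), it is disjoint from `b + c`. -/
lemma aux_inf_add_eq_zero {a b c : X} (ha : 0 ≤ a) (hb : 0 ≤ b) (hc : 0 ≤ c)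
    (hab : a ⊓ b = 0) (hac : a ⊓ c = 0) : a ⊓ (b + c) = 0 := by
  set x := a ⊓ (b + c) with hx
  have h1 : x - (a ⊓ c) ≤ a ⊓ b := by
    rw [sub_inf]
    refine sup_le (le_inf ?_ ?_) (le_inf ?_ ?_)
    · exact (sub_nonpos.mpr inf_le_left).trans ha
    · exact (sub_nonpos.mpr inf_le_left).trans hb
    · exact sub_le_iff_le_add.mpr (inf_le_left.trans (le_add_of_nonneg_right hc))
    · exact sub_le_iff_le_add.mpr inf_le_right
  have hx0 : 0 ≤ x := le_inf ha (add_nonneg hb hc)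
  rw [hab, hac, sub_zero] at h1
  exact le_antisymm h1 hx0

omit [NormedSpace ℝ X] in
lemma aux_negPart_inf_nsmul_posPart (y : X) : ∀ n : ℕ, y⁻ ⊓ (n • y⁺) = 0
  | 0 => by simp [inf_eq_right.mpr (negPart_nonneg y)]
  | (n+1) => by
      rw [succ_nsmul]
      exact aux_inf_add_eq_zero (negPart_nonneg y) (nsmul_nonneg (posPart_nonneg y) n)
        (posPart_nonneg y) (aux_negPart_inf_nsmul_posPart y n)
        (by rw [inf_comm]; exact posPart_inf_negPart_eq_zero y)

omit [NormedSpace ℝ X] in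
lemma aux_nonneg_of_nsmul_nonneg {y : X} {n : ℕ} (hn : 0 < n) (h : 0 ≤ n • y) : 0 ≤ y := by
  have hsub : n • y = n • y⁺ - n • y⁻ := by
    rw [← smul_sub, posPart_sub_negPart]
  have h1 : n • y⁻ ≤ n • y⁺ := by rw [hsub] at h; exact sub_nonneg.mp h
  obtain ⟨m, rfl⟩ := Nat.exists_eq_succ_of_ne_zero hn.ne'
  have h2 : y⁻ ≤ (m+1) • y⁻ := by
    rw [succ_nsmul]
    exact le_add_of_nonneg_left (nsmul_nonneg (negPart_nonneg y) m)
  have h3 : y⁻ ≤ y⁻ ⊓ ((m+1) • y⁺) := le_inf le_rfl (h2.trans h1)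
  rw [aux_negPart_inf_nsmul_posPart] at h3
  exact negPart_eq_zero.mp (le_antisymm h3 (negPart_nonneg y))

/-- In a normed lattice that is a normed real vector space, scalar multiplication by a
nonnegative real preserves positivity. -/
lemma aux_real_smul_nonneg {t : ℝ} {x : X} (ht : 0 ≤ t) (hx : 0 ≤ x) : 0 ≤ t • x := by
  have hq : ∀ q : ℚ, 0 ≤ q → 0 ≤ (q : ℝ) • x := by
    intro q hq0
    have hden : 0 < q.den := q.den_pos
    apply aux_nonneg_of_nsmul_nonneg hden
    have : q.den • ((q:ℝ) • x) = q.num.toNat • x := by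
      rw [← Nat.cast_smul_eq_nsmul ℝ, ← Nat.cast_smul_eq_nsmul ℝ, smul_smul]
      congr 1
      have hnum : ((q.num.toNat : ℕ) : ℝ) = (q.num : ℝ) := by
        norm_cast
        exact Int.toNat_of_nonneg (Rat.num_nonneg.mpr hq0)
      rw [hnum, Rat.cast_def]
      field_simp
    rw [this]
    exact nsmul_nonneg hx _
  have key : ∀ n : ℕ, ∃ q : ℚ, t < (q:ℝ) ∧ (q:ℝ) < t + 1/(n+1) := by
    intro n
    exact exists_rat_btwn (lt_add_of_pos_right t (by positivity))
  choose q hq1 hq2 using key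
  have htend : Tendsto (fun n : ℕ => ((q n : ℝ))) atTop (𝓝 t) := by
    apply tendsto_of_tendsto_of_tendsto_of_le_of_le (g := fun _ : ℕ => t)
      (h := fun n : ℕ => t + 1/(n+1)) tendsto_const_nhds
    · simpa using tendsto_const_nhds.add (tendsto_one_div_add_atTop_nhds_zero_nat (𝕜 := ℝ))
    · exact fun n => (hq1 n).le
    · exact fun n => (hq2 n).le
  have htend2 : Tendsto (fun n : ℕ => (q n : ℝ) • x) atTop (𝓝 (t • x)) :=
    htend.smul_const x
  exact isClosed_nonneg.mem_of_tendsto htend2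
    (Eventually.of_forall fun n => hq _ (by exact_mod_cast (ht.trans (hq1 n).le)))

lemma aux_real_smul_le_smul {t : ℝ} {x y : X} (ht : 0 ≤ t) (h : x ≤ y) : t • x ≤ t • y := by
  have := aux_real_smul_nonneg ht (sub_nonneg.mpr h)
  rw [smul_sub] at this
  exact sub_nonneg.mp this

lemma aux_posPart_smul_le {t : ℝ} (ht : 0 ≤ t) (x : X) : (t • x)⁺ ≤ t • x⁺ :=
  sup_le (aux_real_smul_le_smul ht (le_posPart x)) (aux_real_smul_nonneg ht (posPart_nonneg x))

lemma aux_posPart_smul {t : ℝ} (ht : 0 < t) (x : X) : (t • x)⁺ = t • x⁺ := by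
  refine le_antisymm (aux_posPart_smul_le ht.le x) ?_
  have h2 : x⁺ ≤ t⁻¹ • (t • x)⁺ := by
    have := aux_posPart_smul_le (inv_nonneg.mpr ht.le) (t • x)
    rwa [smul_smul, inv_mul_cancel₀ ht.ne', one_smul] at this
  calc t • x⁺ ≤ t • (t⁻¹ • (t • x)⁺) := aux_real_smul_le_smul ht.le h2
    _ = (t • x)⁺ := by rw [smul_smul, mul_inv_cancel₀ ht.ne', one_smul]

omit [NormedSpace ℝ X] in
lemma aux_norm_posPart_le (x : X) : ‖x⁺‖ ≤ ‖x‖ := by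
  rw [← norm_abs_eq_norm x]
  exact HasSolidNorm.solid (by
    rw [abs_of_nonneg (posPart_nonneg x), abs_abs]
    exact sup_le (le_abs_self x) (abs_nonneg x))

omit [NormedSpace ℝ X] in
lemma aux_norm_negPart_le (x : X) : ‖x⁻‖ ≤ ‖x‖ := by
  rw [← norm_neg x]
  simpa [posPart_neg] using aux_norm_posPart_le (-x)

omit [NormedSpace ℝ X] in
lemma aux_norm_mono_nonneg {a b : X} (ha : 0 ≤ a) (h : a ≤ b) : ‖a‖ ≤ ‖b‖ :=
  HasSolidNorm.solid (by rwa [abs_of_nonneg ha, abs_of_nonneg (ha.trans h)])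

/-- Hahn–Banach: a positive functional `g` with `g ≤ ‖·⁺‖` and `g x = ‖x⁺‖`. -/
lemma aux_exists_pos_functional (x : X) (hx : x ≠ 0) :
    ∃ g : X →L[ℝ] ℝ, (∀ z, 0 ≤ z → 0 ≤ g z) ∧ (∀ z, g z ≤ ‖z⁺‖) ∧ g x = ‖x⁺‖ := by
  set N : X → ℝ := fun z => ‖z⁺‖ with hN
  have N_hom : ∀ c : ℝ, 0 < c → ∀ z, N (c • z) = c * N z := by
    intro c hc z
    simp only [hN, aux_posPart_smul hc, norm_smul, Real.norm_eq_abs, abs_of_pos hc]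
  have N_add : ∀ z w, N (z + w) ≤ N z + N w := by
    intro z w
    have h1 : (z + w)⁺ ≤ z⁺ + w⁺ :=
      sup_le (add_le_add (le_posPart z) (le_posPart w))
        (add_nonneg (posPart_nonneg z) (posPart_nonneg w))
    exact (aux_norm_mono_nonneg (posPart_nonneg _) h1).trans (norm_add_le _ _)
  set f : X →ₗ.[ℝ] ℝ := LinearPMap.mkSpanSingleton x ‖x⁺‖ hx with hf
  have hfle : ∀ z : f.domain, f z ≤ N z := by
    rintro ⟨z, hz⟩
    have hz' : z ∈ Submodule.span ℝ {x} := hz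
    obtain ⟨c, rfl⟩ := Submodule.mem_span_singleton.mp hz'
    have happ : f ⟨c • x, hz⟩ = c • ‖x⁺‖ := LinearPMap.mkSpanSingleton'_apply x ‖x⁺‖ _ c _
    rw [happ]
    rcases lt_trichotomy c 0 with h | h | h
    · have : c • ‖x⁺‖ ≤ 0 := smul_nonpos_of_nonpos_of_nonneg h.le (norm_nonneg _)
      exact this.trans (norm_nonneg _)
    · simp [h, hN, norm_nonneg]
    · rw [smul_eq_mul, ← N_hom c h x]
  obtain ⟨g₀, hg₀f, hg₀N⟩ := exists_extension_of_le_sublinear f N N_hom N_add hfle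
  have hbound : ∀ z, ‖g₀ z‖ ≤ 1 * ‖z‖ := by
    intro z
    rw [one_mul, Real.norm_eq_abs, abs_le]
    constructor
    · have := hg₀N (-z)
      rw [map_neg] at this
      have h2 : N (-z) ≤ ‖z‖ := by
        simpa [hN, posPart_neg] using aux_norm_negPart_le z
      linarith
    · exact (hg₀N z).trans (aux_norm_posPart_le z)
  refine ⟨LinearMap.mkContinuous g₀ 1 hbound, ?_, ?_, ?_⟩
  · intro z hz
    have := hg₀N (-z)
    rw [map_neg] at this
    have h2 : N (-z) = 0 := by
      simp [hN, posPart_neg, negPart_eq_zero.mpr hz]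
    simp only [LinearMap.mkContinuous_apply]
    linarith
  · intro z; exact hg₀N z
  · have := hg₀f ⟨x, Submodule.mem_span_singleton_self x⟩
    simp only [LinearMap.mkContinuous_apply]
    rw [this, LinearPMap.mkSpanSingleton_apply]

/-- A positive functional supported on the positive part of `d`. -/
lemma aux_exists_pos_functional' (d : X) (hd : d ≠ 0) :
    ∃ g : X →L[ℝ] ℝ, (∀ z, 0 ≤ z → 0 ≤ g z) ∧ g d⁺ = ‖d⁺‖ ∧ g d⁻ = 0 := by
  obtain ⟨g, hpos, hle, hgd⟩ := aux_exists_pos_functional d hd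
  have h1 : g d⁺ ≤ ‖d⁺‖ := by
    have := hle d⁺
    rwa [posPart_eq_self.mpr (posPart_nonneg d)] at this
  have h2 : (0:ℝ) ≤ g d⁻ := hpos _ (negPart_nonneg d)
  have h3 : g d⁺ - g d⁻ = ‖d⁺‖ := by rw [← map_sub, posPart_sub_negPart, hgd]
  exact ⟨g, hpos, by linarith, by linarith⟩

lemma aux_exists_smul_eq_of_comp (hcomp : ∀ d : X, d ≤ 0 ∨ 0 ≤ d)
    {u v : X} (hu : 0 ≤ u) (hune : u ≠ 0) (hv : 0 ≤ v) : ∃ t : ℝ, t • u = v := by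
  set A : Set ℝ := {t | v ≤ t • u} with hA
  set B : Set ℝ := {t | t • u ≤ v} with hB
  have hclA : IsClosed A := by
    have : A = (fun t : ℝ => t • u - v) ⁻¹' {x | 0 ≤ x} := by
      ext t; simp [hA, sub_nonneg]
    rw [this]
    exact isClosed_nonneg.preimage (by fun_prop)
  have hclB : IsClosed B := by
    have : B = (fun t : ℝ => v - t • u) ⁻¹' {x | 0 ≤ x} := by
      ext t; simp [hB, sub_nonneg]
    rw [this]
    exact isClosed_nonneg.preimage (by fun_prop)
  have hcover : Set.Ici (0:ℝ) ⊆ A ∪ B := by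
    intro t _
    rcases hcomp (t • u - v) with h | h
    · exact Or.inr (sub_nonpos.mp h)
    · exact Or.inl (sub_nonneg.mp h)
  have hBne : ((Set.Ici (0:ℝ)) ∩ B).Nonempty :=
    ⟨0, Set.mem_inter (Set.self_mem_Ici) (by simp [hB, hv])⟩
  have hAne : ((Set.Ici (0:ℝ)) ∩ A).Nonempty := by
    by_contra hc
    rw [Set.not_nonempty_iff_eq_empty] at hc
    have hall : ∀ n : ℕ, n • u ≤ v := by
      intro n
      have hn : (n:ℝ) ∈ Set.Ici (0:ℝ) := Set.mem_Ici.mpr (Nat.cast_nonneg n)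
      have : (n:ℝ) ∈ A ∪ B := hcover hn
      rcases this with h | h
      · exact absurd (Set.mem_inter hn h) (by simp [hc])
      · rw [hB, Set.mem_setOf_eq, Nat.cast_smul_eq_nsmul] at h
        exact h
    have hnorm : ∀ n : ℕ, n * ‖u‖ ≤ ‖v‖ := by
      intro n
      have h0 : (0:X) ≤ n • u := nsmul_nonneg hu n
      have := aux_norm_mono_nonneg h0 (hall n)
      rw [← Nat.cast_smul_eq_nsmul ℝ, norm_smul, Real.norm_natCast] at this
      exact this
    have : ‖u‖ ≤ 0 := by
      by_contra hpos
      push_neg at hpos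
      obtain ⟨n, hn⟩ := exists_nat_gt (‖v‖ / ‖u‖)
      have := hnorm n
      rw [div_lt_iff₀ hpos] at hn
      linarith
    exact hune (norm_le_zero_iff.mp this)
  obtain ⟨t, _, htA, htB⟩ :=
    (isPreconnected_closed_iff.mp isPreconnected_Ici) A B hclA hclB hcover hAne hBne
  exact ⟨t, le_antisymm htB htA⟩

/-- A normed lattice of dimension `> 1` contains an element that is neither `≤ 0` nor `≥ 0`. -/
lemma aux_exists_indefinite (h : 1 < Module.rank ℝ X) :
    ∃ d : X, ¬ d ≤ 0 ∧ ¬ 0 ≤ d := by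
  by_contra hc
  push_neg at hc
  have hcomp : ∀ d : X, d ≤ 0 ∨ 0 ≤ d := by
    intro d
    by_cases hd : d ≤ 0
    · exact Or.inl hd
    · exact Or.inr (hc d hd)
  have hnt : Nontrivial X := by
    rcases subsingleton_or_nontrivial X with hs | hn
    · have : Module.rank ℝ X = 0 := rank_subsingleton' ℝ X
      rw [this] at h; exact absurd h (by simp)
    · exact hn
  obtain ⟨u0, hu0⟩ := exists_ne (0 : X)
  have key : ∃ u : X, 0 ≤ u ∧ u ≠ 0 := by
    rcases hcomp u0 with h' | h'
    · exact ⟨-u0, neg_nonneg.mpr h', neg_ne_zero.mpr hu0⟩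
    · exact ⟨u0, h', hu0⟩
  obtain ⟨u, hu, hune⟩ := key
  have : Module.rank ℝ X ≤ 1 := by
    rw [rank_le_one_iff]
    refine ⟨u, fun v => ?_⟩
    rcases hcomp v with h' | h'
    · obtain ⟨t, ht⟩ := aux_exists_smul_eq_of_comp hcomp hu hune (neg_nonneg.mpr h')
      exact ⟨-t, by rw [neg_smul, ht, neg_neg]⟩
    · obtain ⟨t, ht⟩ := aux_exists_smul_eq_of_comp hcomp hu hune h'
      exact ⟨t, ht⟩
  exact absurd h (not_lt.mpr this)

lemma aux_rank_span_singleton {M : Type*} [AddCommGroup M] [Module ℝ M] {x : M} (hx : x ≠ 0) :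
    Module.rank ℝ (Submodule.span ℝ ({x} : Set M)) = 1 := by
  have hli : LinearIndependent ℝ (fun _ : Unit => x) := LinearIndependent.of_subsingleton () hx
  have h := rank_span hli
  rw [Set.range_const] at h
  rw [h, Cardinal.mk_singleton]

omit [NormedSpace ℝ X] in
lemma aux_coeff_nonneg {Y : Type*} [NormedAddCommGroup Y] [Lattice Y] [HasSolidNorm Y] [IsOrderedAddMonoid Y] [NormedSpace ℝ Y]
    {y : Y} (hy : 0 ≤ y) (hyne : y ≠ 0) {s : ℝ} (h : 0 ≤ s • y) : 0 ≤ s := by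
  by_contra hs
  push_neg at hs
  have h1 : (0:Y) ≤ (-s) • y := aux_real_smul_nonneg (by linarith) hy
  have h2 : (-s) • y ≤ 0 := by rw [neg_smul]; exact neg_nonpos.mpr h
  have h3 : (-s) • y = 0 := le_antisymm h2 h1
  rcases smul_eq_zero.mp h3 with h4 | h4
  · linarith
  · exact hyne h4

omit [NormedSpace ℝ X] in
lemma aux_abs_eq_zero {a : X} (h : |a| = 0) : a = 0 := by
  have h1 : a ≤ 0 := h ▸ le_abs_self a
  have h2 : -a ≤ 0 := h ▸ neg_le_abs a
  exact le_antisymm h1 (neg_nonpos.mp h2)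

end Auxiliary

variable {E F : Type*}
  [NormedAddCommGroup E] [Lattice E] [HasSolidNorm E] [IsOrderedAddMonoid E] [NormedSpace ℝ E] [CompleteSpace E]
  [NormedAddCommGroup F] [Lattice F] [HasSolidNorm F] [IsOrderedAddMonoid F] [NormedSpace ℝ F] [CompleteSpace F]

omit [CompleteSpace E] [CompleteSpace F] in
lemma isPosOp_zero : IsPosOp (0 : E →L[ℝ] F) := by
  intro x _
  rw [ContinuousLinearMap.zero_apply]

/-- The common final step: given positive functionals `g₁, g₂` and positive vectors `y₁, y₂`
such that no nonzero multiple of `g₁ ⊗ y₁ - g₂ ⊗ y₂` is a positive operator, the span of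
this operator is the required subspace. -/
lemma aux_build (g₁ g₂ : E →L[ℝ] ℝ) (y₁ y₂ : F)
    (hg₁ : ∀ x : E, 0 ≤ x → 0 ≤ g₁ x) (hg₂ : ∀ x : E, 0 ≤ x → 0 ≤ g₂ x)
    (hy₁ : 0 ≤ y₁) (hy₂ : 0 ≤ y₂)
    (hzero : ∀ c : ℝ, IsPosOp (c • (g₁.smulRight y₁ - g₂.smulRight y₂)) → c = 0) :
    ∃ P : Submodule ℝ (E →L[ℝ] F),
      Module.rank ℝ P = 1 ∧
      {T : E →L[ℝ] F | IsRegPOp (P : Set (E →L[ℝ] F)) T} = {0} ∧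
      (∀ T ∈ P, ∃ T₁ T₂ : E →L[ℝ] F, IsPosOp T₁ ∧ IsPosOp T₂ ∧ T = T₁ - T₂) := by
  set S₁ : E →L[ℝ] F := g₁.smulRight y₁ with hS₁
  set S₂ : E →L[ℝ] F := g₂.smulRight y₂ with hS₂
  set T₀ : E →L[ℝ] F := S₁ - S₂ with hT₀
  have hT₀ne : T₀ ≠ 0 := by
    intro h0
    have : (1:ℝ) = 0 := hzero 1 (by rw [h0, smul_zero]; exact isPosOp_zero)
    exact one_ne_zero this
  have hS₁pos : ∀ a : ℝ, 0 ≤ a → IsPosOp (a • S₁) := by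
    intro a ha x hx
    rw [ContinuousLinearMap.smul_apply, hS₁, ContinuousLinearMap.smulRight_apply]
    exact aux_real_smul_nonneg ha (aux_real_smul_nonneg (hg₁ x hx) hy₁)
  have hS₂pos : ∀ a : ℝ, 0 ≤ a → IsPosOp (a • S₂) := by
    intro a ha x hx
    rw [ContinuousLinearMap.smul_apply, hS₂, ContinuousLinearMap.smulRight_apply]
    exact aux_real_smul_nonneg ha (aux_real_smul_nonneg (hg₂ x hx) hy₂)
  refine ⟨Submodule.span ℝ {T₀}, aux_rank_span_singleton hT₀ne, ?_, ?_⟩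
  · ext T
    simp only [Set.mem_setOf_eq, Set.mem_singleton_iff]
    constructor
    · rintro ⟨A, B, hA, hB, hApos, hBpos, rfl⟩
      obtain ⟨a, ha⟩ := Submodule.mem_span_singleton.mp hA
      obtain ⟨b, hb⟩ := Submodule.mem_span_singleton.mp hB
      have ha0 : a = 0 := hzero a (by rw [ha]; exact hApos)
      have hb0 : b = 0 := hzero b (by rw [hb]; exact hBpos)
      rw [← ha, ← hb, ha0, hb0, zero_smul, sub_zero]
    · rintro rfl
      exact ⟨0, 0, Submodule.zero_mem _, Submodule.zero_mem _, isPosOp_zero, isPosOp_zero,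
        (sub_zero (0 : E →L[ℝ] F)).symm⟩
  · intro T hT
    obtain ⟨c, hc⟩ := Submodule.mem_span_singleton.mp hT
    rcases le_or_gt 0 c with h | h
    · refine ⟨c • S₁, c • S₂, hS₁pos c h, hS₂pos c h, ?_⟩
      rw [← hc, hT₀, smul_sub]
    · refine ⟨(-c) • S₂, (-c) • S₁, hS₂pos (-c) (by linarith), hS₁pos (-c) (by linarith), ?_⟩
      rw [← hc, hT₀, smul_sub]
      simp only [neg_smul]
      abel

/-- If `dim L(E,F) > 1` then there is a one-dimensional subspace `P` of `L(E,F)` such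
that the space of regularly `P`-operators is `{0}` while every member of `P` is a
regular operator, i.e. `r-P(E,F)` is a proper subspace of `P_r(E,F) = P`. -/
theorem exists_oneDim_subspace_regPOp_proper
    (hdim : 1 < Module.rank ℝ (E →L[ℝ] F)) :
    ∃ P : Submodule ℝ (E →L[ℝ] F),
      Module.rank ℝ P = 1 ∧
      {T : E →L[ℝ] F | IsRegPOp (P : Set (E →L[ℝ] F)) T} = {0} ∧
      (∀ T ∈ P, ∃ T₁ T₂ : E →L[ℝ] F, IsPosOp T₁ ∧ IsPosOp T₂ ∧ T = T₁ - T₂) := by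
  -- E and F are nontrivial
  have hntE : Nontrivial E := by
    rcases subsingleton_or_nontrivial E with hs | hn
    · exfalso
      have hsub : Subsingleton (E →L[ℝ] F) :=
        ⟨fun S T => by ext x; rw [Subsingleton.elim x 0, map_zero, map_zero]⟩
      have : Module.rank ℝ (E →L[ℝ] F) = 0 := rank_subsingleton' ℝ _
      rw [this] at hdim
      exact absurd hdim (by simp)
    · exact hn
  have hntF : Nontrivial F := by
    rcases subsingleton_or_nontrivial F with hs | hn
    · exfalso
      have hsub : Subsingleton (E →L[ℝ] F) :=
        ⟨fun S T => by ext x; exact Subsingleton.elim _ _⟩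
      have : Module.rank ℝ (E →L[ℝ] F) = 0 := rank_subsingleton' ℝ _
      rw [this] at hdim
      exact absurd hdim (by simp)
    · exact hn
  -- positive nonzero elements
  obtain ⟨v, hv⟩ := exists_ne (0 : E)
  have hx₀ : (0:E) ≤ |v| := abs_nonneg v
  have hx₀ne : |v| ≠ 0 := fun h => hv (aux_abs_eq_zero h)
  obtain ⟨w, hw⟩ := exists_ne (0 : F)
  have hy₀ : (0:F) ≤ |w| := abs_nonneg w
  have hy₀ne : |w| ≠ 0 := fun h => hw (aux_abs_eq_zero h)
  set x₀ : E := |v|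
  set y₀ : F := |w|
  by_cases hE : 1 < Module.rank ℝ E
  · -- E-side: indefinite element of E
    obtain ⟨d, hd1, hd2⟩ := aux_exists_indefinite hE
    have hdne : d ≠ 0 := fun h => hd2 (le_of_eq h.symm)
    have hdp : d⁺ ≠ 0 := fun h => hd1 (posPart_eq_zero.mp h)
    have hdm : d⁻ ≠ 0 := fun h => hd2 (negPart_eq_zero.mp h)
    have hdpn : (0:ℝ) < ‖d⁺‖ := norm_pos_iff.mpr hdp
    have hdmn : (0:ℝ) < ‖d⁻‖ := norm_pos_iff.mpr hdm
    obtain ⟨g₁, hg₁pos, hg₁p, hg₁m⟩ := aux_exists_pos_functional' d hdne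
    obtain ⟨g₂, hg₂pos, hg₂p', hg₂m'⟩ := aux_exists_pos_functional' (-d) (neg_ne_zero.mpr hdne)
    rw [posPart_neg] at hg₂p'
    rw [negPart_neg] at hg₂m'
    -- hg₂p' : g₂ d⁻ = ‖d⁻‖ ; hg₂m' : g₂ d⁺ = 0
    apply aux_build g₁ g₂ y₀ y₀ hg₁pos hg₂pos hy₀ hy₀
    intro c hpos
    have hval₁ := hpos d⁺ (posPart_nonneg d)
    have hval₂ := hpos d⁻ (negPart_nonneg d)
    rw [ContinuousLinearMap.smul_apply, ContinuousLinearMap.sub_apply,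
      ContinuousLinearMap.smulRight_apply, ContinuousLinearMap.smulRight_apply,
      hg₁p, hg₂m', zero_smul, sub_zero, smul_smul] at hval₁
    rw [ContinuousLinearMap.smul_apply, ContinuousLinearMap.sub_apply,
      ContinuousLinearMap.smulRight_apply, ContinuousLinearMap.smulRight_apply,
      hg₁m, hg₂p', zero_smul, zero_sub, smul_neg, ← neg_smul, smul_smul] at hval₂
    have h1 : (0:ℝ) ≤ c * ‖d⁺‖ := aux_coeff_nonneg hy₀ hy₀ne hval₁
    have h2 : (0:ℝ) ≤ -c * ‖d⁻‖ := aux_coeff_nonneg hy₀ hy₀ne hval₂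
    have hcge : 0 ≤ c := (mul_nonneg_iff_of_pos_right hdpn).mp h1
    have hcle : 0 ≤ -c := (mul_nonneg_iff_of_pos_right hdmn).mp h2
    have : c = 0 := le_antisymm (neg_nonneg.mp hcle) hcge
    exact this
  · by_cases hF : 1 < Module.rank ℝ F
    · -- F-side: indefinite element of F
      obtain ⟨e, he1, he2⟩ := aux_exists_indefinite hF
      obtain ⟨g, hgpos, hgle, hgx₀⟩ := aux_exists_pos_functional x₀ hx₀ne
      rw [posPart_eq_self.mpr hx₀] at hgx₀
      have hx₀n : (0:ℝ) < ‖x₀‖ := norm_pos_iff.mpr hx₀ne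
      apply aux_build g g e⁺ e⁻ hgpos hgpos (posPart_nonneg e) (negPart_nonneg e)
      intro c hpos
      have hval := hpos x₀ hx₀
      rw [ContinuousLinearMap.smul_apply, ContinuousLinearMap.sub_apply,
        ContinuousLinearMap.smulRight_apply, ContinuousLinearMap.smulRight_apply,
        hgx₀, ← smul_sub, posPart_sub_negPart, smul_smul] at hval
      by_contra hc
      have hs : c * ‖x₀‖ ≠ 0 := mul_ne_zero hc (ne_of_gt hx₀n)
      set s : ℝ := c * ‖x₀‖ with hsdef
      rcases lt_or_gt_of_ne hs with hlt | hgt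
      · have h1 : (0:F) ≤ (-s⁻¹) • (s • e) :=
          aux_real_smul_nonneg (le_of_lt (by rw [neg_pos]; exact inv_lt_zero.mpr hlt)) hval
        rw [smul_smul, neg_mul, inv_mul_cancel₀ hs, neg_smul, one_smul] at h1
        exact he1 (neg_nonneg.mp h1)
      · have h1 : (0:F) ≤ s⁻¹ • (s • e) := aux_real_smul_nonneg (inv_nonneg.mpr hgt.le) hval
        rw [smul_smul, inv_mul_cancel₀ hs, one_smul] at h1
        exact he2 h1
    · -- contradiction: rank ≤ 1
      exfalso
      obtain ⟨v₀, hv₀⟩ := rank_le_one_iff.mp (not_lt.mp hE)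
      set φ : (E →L[ℝ] F) →ₗ[ℝ] F :=
        { toFun := fun T => T v₀
          map_add' := fun S T => by simp
          map_smul' := fun r T => by simp } with hφ
      have hinj : Function.Injective φ := by
        intro S T h
        have h' : S v₀ = T v₀ := h
        ext x
        obtain ⟨r, rfl⟩ := hv₀ x
        rw [map_smul, map_smul, h']
      have h1 := LinearMap.lift_rank_le_of_injective φ hinj
      have h2 : Module.rank ℝ F ≤ 1 := not_lt.mp hF
      have h3 : Cardinal.lift (Module.rank ℝ F) ≤ Cardinal.lift 1 := Cardinal.lift_le.mpr h2
      rw [Cardinal.lift_one] at h3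
      have h4 := h1.trans h3
      have h5 : Module.rank ℝ (E →L[ℝ] F) ≤ 1 := by
        rw [← Cardinal.lift_le, Cardinal.lift_one]
        exact h4
      exact absurd hdim (not_lt.mpr h5)
end

section
/- Let E, F be Banach lattices and P a linear subspace of L(E,F) that is closed in the operator norm. Then the space r-P(E,F) of regularly P-operators is a Banach space under the enveloping norm ‖T‖_{r-P} = inf{‖S‖ : S ∈ P, -S ≤ T ≤ S}. -/
open Filter Topology Pointwise

variable {E F : Type*}
  [NormedAddCommGroup E] [Lattice E] [HasSolidNorm E] [IsOrderedAddMonoid E] [NormedSpace ℝ E] [CompleteSpace E]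
  [NormedAddCommGroup F] [Lattice F] [HasSolidNorm F] [IsOrderedAddMonoid F] [NormedSpace ℝ F] [CompleteSpace F]

/-- The enveloping norm of `T` relative to `P`. -/
noncomputable def envNorm (P : Set (E →L[ℝ] F)) (T : E →L[ℝ] F) : ℝ :=
  sInf {c : ℝ | ∃ S ∈ P, OpLE (-S) T ∧ OpLE T S ∧ c = ‖S‖}

/-! ### Auxiliary lemmas -/

section Aux

/-- In a normed lattice which is also a real normed space, multiplication by a nonnegative
scalar preserves positivity.  (This is not a typeclass assumption here, so we derive it from
the closedness of the positive cone and the `2`-semiclosedness of lattice groups.) -/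
lemma smul_nonneg'' {c : ℝ} (hc : 0 ≤ c) {y : F} (hy : 0 ≤ y) : 0 ≤ c • y := by
  -- step 1 : dyadic powers
  have hdy : ∀ k : ℕ, 0 ≤ ((2 : ℝ)⁻¹ ^ k) • y := by
    intro k
    induction k with
    | zero => simpa using hy
    | succ k ih =>
      refine nsmul_two_semiclosed ?_
      have : (2 : ℕ) • (((2 : ℝ)⁻¹ ^ (k + 1)) • y) = ((2 : ℝ)⁻¹ ^ k) • y := by
        rw [← Nat.cast_smul_eq_nsmul ℝ, smul_smul]
        congr 1
        rw [pow_succ]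
        push_cast
        ring
      rw [this]; exact ih
  -- step 2 : nonnegative dyadic rationals
  have hdy2 : ∀ (m k : ℕ), 0 ≤ ((m : ℝ) * (2 : ℝ)⁻¹ ^ k) • y := by
    intro m k
    rw [mul_smul, Nat.cast_smul_eq_nsmul ℝ]
    exact nsmul_nonneg (hdy k) m
  -- step 3 : approximate `c` by dyadic rationals from below
  have h2n : Tendsto (fun n : ℕ => ((2 : ℝ) ^ n)) atTop atTop :=
    tendsto_pow_atTop_atTop_of_one_lt (by norm_num)
  have happrox : Tendsto (fun n : ℕ => (⌊c * (2 : ℝ) ^ n⌋₊ : ℝ) / (2 : ℝ) ^ n)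
      atTop (𝓝 c) := (tendsto_nat_floor_mul_div_atTop hc).comp h2n
  have hlim : Tendsto (fun n : ℕ => ((⌊c * (2 : ℝ) ^ n⌋₊ : ℝ) / (2 : ℝ) ^ n) • y)
      atTop (𝓝 (c • y)) := happrox.smul_const y
  refine ge_of_tendsto hlim (Eventually.of_forall fun n => ?_)
  have : ((⌊c * (2 : ℝ) ^ n⌋₊ : ℝ) / (2 : ℝ) ^ n)
      = (⌊c * (2 : ℝ) ^ n⌋₊ : ℝ) * (2 : ℝ)⁻¹ ^ n := by
    rw [div_eq_mul_inv, inv_pow]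
  rw [this]
  exact hdy2 _ _

lemma IsPosOp.congr {A B : E →L[ℝ] F} (h : IsPosOp A) (e : A = B) : IsPosOp B := e ▸ h

lemma isPosOp_add {S T : E →L[ℝ] F} (hS : IsPosOp S) (hT : IsPosOp T) : IsPosOp (S + T) :=
  fun x hx => by
    simpa using add_nonneg (hS x hx) (hT x hx)

lemma isPosOp_smul {c : ℝ} (hc : 0 ≤ c) {S : E →L[ℝ] F} (hS : IsPosOp S) : IsPosOp (c • S) :=
  fun x hx => by
    rw [ContinuousLinearMap.smul_apply]
    exact smul_nonneg'' hc (hS x hx)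

lemma isPosOp_sum {s : Finset ℕ} {f : ℕ → E →L[ℝ] F} (hf : ∀ i ∈ s, IsPosOp (f i)) :
    IsPosOp (∑ i ∈ s, f i) := fun x hx => by
  rw [ContinuousLinearMap.sum_apply]
  exact Finset.sum_nonneg fun i hi => hf i hi x hx

/-- The set whose infimum is the enveloping norm. -/
def eSet (P : Set (E →L[ℝ] F)) (T : E →L[ℝ] F) : Set ℝ :=
  {c : ℝ | ∃ S ∈ P, OpLE (-S) T ∧ OpLE T S ∧ c = ‖S‖}

lemma envNorm_eq (P : Set (E →L[ℝ] F)) (T : E →L[ℝ] F) : envNorm P T = sInf (eSet P T) := rfl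

lemma eSet_bddBelow (P : Set (E →L[ℝ] F)) (T : E →L[ℝ] F) : BddBelow (eSet P T) := by
  refine ⟨0, ?_⟩
  rintro c ⟨S, _, _, _, rfl⟩
  exact norm_nonneg S

lemma envNorm_nonneg (P : Set (E →L[ℝ] F)) (T : E →L[ℝ] F) : 0 ≤ envNorm P T := by
  refine Real.sInf_nonneg ?_
  rintro c ⟨S, _, _, _, rfl⟩
  exact norm_nonneg S

/-- The operator norm is dominated by any admissible bound. -/
lemma opNorm_le_of_admissible {S T : E →L[ℝ] F} (h1 : OpLE (-S) T) (h2 : OpLE T S) :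
    ‖T‖ ≤ ‖S‖ := by
  refine ContinuousLinearMap.opNorm_le_bound _ (norm_nonneg S) fun x => ?_
  have hxp : (0 : E) ≤ x⁺ := posPart_nonneg x
  have hxn : (0 : E) ≤ x⁻ := negPart_nonneg x
  have hp1 : (0 : F) ≤ T x⁺ + S x⁺ := by
    have h := h1 x⁺ hxp
    simp only [ContinuousLinearMap.sub_apply, ContinuousLinearMap.add_apply,
      ContinuousLinearMap.neg_apply, sub_neg_eq_add] at h
    exact h
  have hp2 : T x⁺ ≤ S x⁺ := by
    have h := h2 x⁺ hxp
    simp only [ContinuousLinearMap.sub_apply] at h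
    exact sub_nonneg.mp h
  have hn1 : (0 : F) ≤ T x⁻ + S x⁻ := by
    have h := h1 x⁻ hxn
    simp only [ContinuousLinearMap.sub_apply, ContinuousLinearMap.add_apply,
      ContinuousLinearMap.neg_apply, sub_neg_eq_add] at h
    exact h
  have hn2 : T x⁻ ≤ S x⁻ := by
    have h := h2 x⁻ hxn
    simp only [ContinuousLinearMap.sub_apply] at h
    exact sub_nonneg.mp h
  have hn1' : -(T x⁻) ≤ S x⁻ := sub_nonneg.mp (hn1.trans_eq (by module))
  have hp1' : -(T x⁺) ≤ S x⁺ := sub_nonneg.mp (hp1.trans_eq (by module))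
  have hTx : T x = T x⁺ - T x⁻ := by rw [← map_sub, posPart_sub_negPart]
  have hSx : S |x| = S x⁺ + S x⁻ := by rw [← map_add, posPart_add_negPart]
  have key : |T x| ≤ S |x| := by
    rw [abs_le']
    constructor
    · rw [hTx, hSx, sub_eq_add_neg]
      exact add_le_add hp2 hn1'
    · rw [hTx, hSx, neg_sub, sub_eq_add_neg, add_comm (S x⁺)]
      exact add_le_add hn2 hp1'
  have h1' : ‖T x‖ ≤ ‖S |x|‖ := by
    rw [← norm_abs_eq_norm (T x)]
    exact norm_le_norm_of_abs_le_abs (by rw [abs_abs]; exact key.trans (le_abs_self _))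
  calc ‖T x‖ ≤ ‖S |x|‖ := h1'
    _ ≤ ‖S‖ * ‖|x|‖ := S.le_opNorm _
    _ = ‖S‖ * ‖x‖ := by rw [norm_abs_eq_norm]

lemma eSet_nonempty {P : Submodule ℝ (E →L[ℝ] F)} {T : E →L[ℝ] F}
    (h : IsRegPOp (P : Set (E →L[ℝ] F)) T) : (eSet (P : Set (E →L[ℝ] F)) T).Nonempty := by
  obtain ⟨A, B, hA, hB, pA, pB, rfl⟩ := h
  refine ⟨‖A + B‖, A + B, P.add_mem hA hB, ?_, ?_, rfl⟩
  · intro x hx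
    have h := add_nonneg (pA x hx) (pA x hx)
    refine h.trans_eq ?_
    simp only [ContinuousLinearMap.sub_apply, ContinuousLinearMap.add_apply,
      ContinuousLinearMap.neg_apply]
    module
  · intro x hx
    have h := add_nonneg (pB x hx) (pB x hx)
    refine h.trans_eq ?_
    simp only [ContinuousLinearMap.sub_apply, ContinuousLinearMap.add_apply]
    module

lemma opNorm_le_envNorm {P : Submodule ℝ (E →L[ℝ] F)} {T : E →L[ℝ] F}
    (h : IsRegPOp (P : Set (E →L[ℝ] F)) T) : ‖T‖ ≤ envNorm (P : Set (E →L[ℝ] F)) T := by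
  refine le_csInf (eSet_nonempty h) ?_
  rintro c ⟨S, _, h1, h2, rfl⟩
  exact opNorm_le_of_admissible h1 h2

lemma envNorm_zero (P : Submodule ℝ (E →L[ℝ] F)) :
    envNorm (P : Set (E →L[ℝ] F)) (0 : E →L[ℝ] F) = 0 := by
  refine le_antisymm ?_ (envNorm_nonneg _ _)
  have h0 : (0 : ℝ) ∈ eSet (P : Set (E →L[ℝ] F)) (0 : E →L[ℝ] F) := by
    refine ⟨0, P.zero_mem, ?_, ?_, by simp⟩
    · intro x hx; simp
    · intro x hx; simp
  exact csInf_le (eSet_bddBelow _ _) h0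

lemma admissible_smul (c : ℝ) {S T : E →L[ℝ] F} (h1 : OpLE (-S) T) (h2 : OpLE T S) :
    OpLE (-(|c| • S)) (c • T) ∧ OpLE (c • T) (|c| • S) := by
  constructor
  · intro x hx
    simp only [ContinuousLinearMap.sub_apply, ContinuousLinearMap.add_apply,
      ContinuousLinearMap.neg_apply, ContinuousLinearMap.smul_apply, sub_neg_eq_add]
    rcases le_or_gt 0 c with hc | hc
    · rw [abs_of_nonneg hc]
      have h := h1 x hx
      simp only [ContinuousLinearMap.sub_apply, ContinuousLinearMap.add_apply,
        ContinuousLinearMap.neg_apply, sub_neg_eq_add] at h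
      exact (smul_nonneg'' hc h).trans_eq (by module)
    · rw [abs_of_neg hc]
      have h := h2 x hx
      simp only [ContinuousLinearMap.sub_apply] at h
      exact (smul_nonneg'' (neg_nonneg.mpr hc.le) h).trans_eq (by module)
  · intro x hx
    simp only [ContinuousLinearMap.sub_apply, ContinuousLinearMap.add_apply,
      ContinuousLinearMap.neg_apply, ContinuousLinearMap.smul_apply, sub_neg_eq_add]
    rcases le_or_gt 0 c with hc | hc
    · rw [abs_of_nonneg hc]
      have h := h2 x hx
      simp only [ContinuousLinearMap.sub_apply] at h
      exact (smul_nonneg'' hc h).trans_eq (by module)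
    · rw [abs_of_neg hc]
      have h := h1 x hx
      simp only [ContinuousLinearMap.sub_apply, ContinuousLinearMap.add_apply,
        ContinuousLinearMap.neg_apply, sub_neg_eq_add] at h
      exact (smul_nonneg'' (neg_nonneg.mpr hc.le) h).trans_eq (by module)

lemma eSet_neg (P : Set (E →L[ℝ] F)) (T : E →L[ℝ] F) : eSet P (-T) = eSet P T := by
  ext r
  constructor
  · rintro ⟨S, hSP, h1, h2, rfl⟩
    exact ⟨S, hSP, h2.congr (by module), h1.congr (by module), rfl⟩
  · rintro ⟨S, hSP, h1, h2, rfl⟩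
    exact ⟨S, hSP, h2.congr (by module), h1.congr (by module), rfl⟩

lemma envNorm_neg (P : Set (E →L[ℝ] F)) (T : E →L[ℝ] F) : envNorm P (-T) = envNorm P T := by
  rw [envNorm_eq, envNorm_eq, eSet_neg]

lemma IsRegPOp.sub {P : Submodule ℝ (E →L[ℝ] F)} {T₁ T₂ : E →L[ℝ] F}
    (h1 : IsRegPOp (P : Set (E →L[ℝ] F)) T₁) (h2 : IsRegPOp (P : Set (E →L[ℝ] F)) T₂) :
    IsRegPOp (P : Set (E →L[ℝ] F)) (T₁ - T₂) := by
  obtain ⟨A₁, B₁, hA₁, hB₁, pA₁, pB₁, rfl⟩ := h1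
  obtain ⟨A₂, B₂, hA₂, hB₂, pA₂, pB₂, rfl⟩ := h2
  exact ⟨A₁ + B₂, B₁ + A₂, P.add_mem hA₁ hB₂, P.add_mem hB₁ hA₂,
    isPosOp_add pA₁ pB₂, isPosOp_add pB₁ pA₂, by module⟩

lemma IsRegPOp.memP {P : Submodule ℝ (E →L[ℝ] F)} {T : E →L[ℝ] F}
    (h : IsRegPOp (P : Set (E →L[ℝ] F)) T) : T ∈ P := by
  obtain ⟨A, B, hA, hB, _, _, rfl⟩ := h
  exact P.sub_mem hA hB

lemma envNorm_add_le {P : Submodule ℝ (E →L[ℝ] F)} {T₁ T₂ : E →L[ℝ] F}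
    (h1 : IsRegPOp (P : Set (E →L[ℝ] F)) T₁) (h2 : IsRegPOp (P : Set (E →L[ℝ] F)) T₂) :
    envNorm (P : Set (E →L[ℝ] F)) (T₁ + T₂) ≤
      envNorm (P : Set (E →L[ℝ] F)) T₁ + envNorm (P : Set (E →L[ℝ] F)) T₂ := by
  have key : ∀ a ∈ eSet (P : Set (E →L[ℝ] F)) T₁, ∀ b ∈ eSet (P : Set (E →L[ℝ] F)) T₂,
      envNorm (P : Set (E →L[ℝ] F)) (T₁ + T₂) ≤ a + b := by
    rintro a ⟨S₁, m₁, p₁, q₁, rfl⟩ b ⟨S₂, m₂, p₂, q₂, rfl⟩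
    have hmem : ‖S₁ + S₂‖ ∈ eSet (P : Set (E →L[ℝ] F)) (T₁ + T₂) :=
      ⟨S₁ + S₂, P.add_mem m₁ m₂, (isPosOp_add p₁ p₂).congr (by module),
        (isPosOp_add q₁ q₂).congr (by module), rfl⟩
    exact (csInf_le (eSet_bddBelow _ _) hmem).trans (norm_add_le _ _)
  have step1 : ∀ a ∈ eSet (P : Set (E →L[ℝ] F)) T₁,
      envNorm (P : Set (E →L[ℝ] F)) (T₁ + T₂) - a ≤ envNorm (P : Set (E →L[ℝ] F)) T₂ := by
    intro a ha
    refine le_csInf (eSet_nonempty h2) fun b hb => ?_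
    have := key a ha b hb
    linarith
  have step2 : envNorm (P : Set (E →L[ℝ] F)) (T₁ + T₂) - envNorm (P : Set (E →L[ℝ] F)) T₂ ≤
      envNorm (P : Set (E →L[ℝ] F)) T₁ := by
    refine le_csInf (eSet_nonempty h1) fun a ha => ?_
    have := step1 a ha
    linarith
  linarith

lemma isPosOp_of_admissible {S T : E →L[ℝ] F} (h1 : OpLE (-S) T) (h2 : OpLE T S) :
    IsPosOp S := by
  intro x hx
  have ha := h1 x hx
  have hb := h2 x hx
  simp only [ContinuousLinearMap.sub_apply, ContinuousLinearMap.add_apply,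
    ContinuousLinearMap.neg_apply, sub_neg_eq_add] at ha hb
  have h := add_nonneg ha hb
  have := smul_nonneg'' (by norm_num : (0:ℝ) ≤ 2⁻¹) h
  exact this.trans_eq (by module)

end Aux

/-- If `P` is a subspace of `L(E,F)` closed in the operator norm, then the space of
regularly `P`-operators is a Banach space under the enveloping norm: the enveloping
norm is a norm on it, and every Cauchy sequence (w.r.t. the enveloping norm) of
regularly `P`-operators converges, in the enveloping norm, to a regularly
`P`-operator. -/
theorem regPOp_banachSpace_envNorm (P : Submodule ℝ (E →L[ℝ] F))
    (hP : IsClosed (P : Set (E →L[ℝ] F))) :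
    ((∀ T : E →L[ℝ] F, IsRegPOp (P : Set (E →L[ℝ] F)) T →
        (0 ≤ envNorm (P : Set (E →L[ℝ] F)) T ∧
          (envNorm (P : Set (E →L[ℝ] F)) T = 0 ↔ T = 0) ∧
          ∀ c : ℝ, envNorm (P : Set (E →L[ℝ] F)) (c • T) =
            |c| * envNorm (P : Set (E →L[ℝ] F)) T)) ∧
      (∀ T₁ T₂ : E →L[ℝ] F, IsRegPOp (P : Set (E →L[ℝ] F)) T₁ →
        IsRegPOp (P : Set (E →L[ℝ] F)) T₂ →
        envNorm (P : Set (E →L[ℝ] F)) (T₁ + T₂) ≤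
          envNorm (P : Set (E →L[ℝ] F)) T₁ + envNorm (P : Set (E →L[ℝ] F)) T₂)) ∧
    (∀ T : ℕ → E →L[ℝ] F, (∀ n, IsRegPOp (P : Set (E →L[ℝ] F)) (T n)) →
      (∀ ε : ℝ, 0 < ε → ∃ N : ℕ, ∀ m ≥ N, ∀ n ≥ N,
        envNorm (P : Set (E →L[ℝ] F)) (T m - T n) < ε) →
      ∃ L : E →L[ℝ] F, IsRegPOp (P : Set (E →L[ℝ] F)) L ∧
        Tendsto (fun n => envNorm (P : Set (E →L[ℝ] F)) (T n - L)) atTop (𝓝 0)) := by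
  refine ⟨⟨?_, fun T₁ T₂ h1 h2 => envNorm_add_le h1 h2⟩, ?_⟩
  · -- norm axioms
    intro T hT
    refine ⟨envNorm_nonneg _ _, ⟨fun h0 => ?_, fun h0 => by rw [h0]; exact envNorm_zero P⟩, ?_⟩
    · have := opNorm_le_envNorm hT
      rw [h0] at this
      exact norm_le_zero_iff.mp this
    · intro c
      rcases eq_or_ne c 0 with rfl | hc
      · simp [envNorm_zero P]
      · have hset : eSet (P : Set (E →L[ℝ] F)) (c • T) = |c| • eSet (P : Set (E →L[ℝ] F)) T := by
          ext r
          constructor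
          · rintro ⟨S, hSP, h1, h2, rfl⟩
            have hadm := admissible_smul c⁻¹ h1 h2
            have hTT : c⁻¹ • (c • T) = T := by
              rw [smul_smul, inv_mul_cancel₀ hc, one_smul]
            rw [hTT, abs_inv] at hadm
            refine ⟨|c|⁻¹ * ‖S‖, ⟨|c|⁻¹ • S, P.smul_mem _ hSP, hadm.1, hadm.2, ?_⟩, ?_⟩
            · rw [norm_smul (|c|⁻¹) S, Real.norm_eq_abs,
                abs_of_nonneg (by positivity : (0:ℝ) ≤ |c|⁻¹)]
            · have habs : |c| ≠ 0 := abs_ne_zero.mpr hc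
              simp only [smul_eq_mul]; field_simp
          · rintro ⟨r', ⟨S, hSP, h1, h2, rfl⟩, rfl⟩
            have hadm := admissible_smul c h1 h2
            refine ⟨|c| • S, P.smul_mem _ hSP, hadm.1, hadm.2, ?_⟩
            show |c| • ‖S‖ = ‖|c| • S‖
            rw [norm_smul (|c|) S, Real.norm_eq_abs, abs_abs, smul_eq_mul]
        rw [envNorm_eq, hset, Real.sInf_smul_of_nonneg (abs_nonneg c), smul_eq_mul, envNorm_eq]
  · -- completeness
    intro T hreg hC
    have hregsub : ∀ m n, IsRegPOp (P : Set (E →L[ℝ] F)) (T m - T n) :=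
      fun m n => (hreg m).sub (hreg n)
    have hTmem : ∀ n, T n ∈ P := fun n => (hreg n).memP
    -- operator norm limit
    have hcauchy : CauchySeq T := by
      rw [Metric.cauchySeq_iff]
      intro ε hε
      obtain ⟨N, hN⟩ := hC ε hε
      exact ⟨N, fun m hm n hn => by
        rw [dist_eq_norm]
        exact (opNorm_le_envNorm (hregsub m n)).trans_lt (hN m hm n hn)⟩
    obtain ⟨L, hL⟩ := cauchySeq_tendsto_of_complete hcauchy
    have hLP : L ∈ P := hP.mem_of_tendsto hL (Eventually.of_forall hTmem)
    -- evaluation is continuous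
    have happly : ∀ (x : E) {A : ℕ → E →L[ℝ] F} {B : E →L[ℝ] F},
        Tendsto A atTop (𝓝 B) → Tendsto (fun n => A n x) atTop (𝓝 (B x)) := by
      intro x A B h
      exact ((ContinuousLinearMap.apply ℝ F x).continuous.tendsto B).comp h
    have hposlim : ∀ {A : ℕ → E →L[ℝ] F} {B : E →L[ℝ] F},
        Tendsto A atTop (𝓝 B) → (∀ n, IsPosOp (A n)) → IsPosOp B := by
      intro A B hAB hA x hx
      exact ge_of_tendsto (happly x hAB) (Eventually.of_forall fun n => hA n x hx)
    -- fast subsequence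
    choose N0 hN0 using fun k : ℕ => hC ((2 : ℝ)⁻¹ ^ k) (by positivity)
    set N : ℕ → ℕ := fun k => Nat.rec (N0 0) (fun k ih => max (N0 (k + 1)) (ih + 1)) k with hNdef
    have hNsucc : ∀ k, N (k + 1) = max (N0 (k + 1)) (N k + 1) := fun k => rfl
    have hNmono : StrictMono N := strictMono_nat_of_lt_succ fun k => by
      rw [hNsucc]
      exact lt_of_lt_of_le (Nat.lt_succ_self _) (le_max_right _ _)
    have hNge : ∀ k, N0 k ≤ N k := by
      intro k
      cases k with
      | zero => exact le_refl _
      | succ k => rw [hNsucc]; exact le_max_left _ _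
    have hUenv : ∀ k, envNorm (P : Set (E →L[ℝ] F)) (T (N (k + 1)) - T (N k)) < (2 : ℝ)⁻¹ ^ k :=
      fun k => hN0 k (N (k + 1)) ((hNge k).trans (hNmono (Nat.lt_succ_self k)).le)
        (N k) (hNge k)
    -- choose the controlling operators
    have hex : ∀ k, ∃ S : E →L[ℝ] F, S ∈ P ∧ OpLE (-S) (T (N (k + 1)) - T (N k)) ∧
        OpLE (T (N (k + 1)) - T (N k)) S ∧ ‖S‖ < (2 : ℝ)⁻¹ ^ k := by
      intro k
      have hne := eSet_nonempty (hregsub (N (k + 1)) (N k))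
      have hlt := (csInf_lt_iff (eSet_bddBelow _ _) hne).mp (hUenv k)
      obtain ⟨c, ⟨S, hSP, h1, h2, rfl⟩, hclt⟩ := hlt
      exact ⟨S, hSP, h1, h2, hclt⟩
    choose S hSP hS1 hS2 hSn using hex
    -- geometric summability
    have hgeo : ∀ k : ℕ, Summable (fun j : ℕ => (2 : ℝ)⁻¹ ^ (j + k)) := by
      intro k
      have : Summable (fun j : ℕ => (2 : ℝ)⁻¹ ^ j * (2 : ℝ)⁻¹ ^ k) :=
        (summable_geometric_of_lt_one (by norm_num) (by norm_num)).mul_right _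
      simpa [pow_add] using this
    have hsum : ∀ k : ℕ, Summable (fun j : ℕ => S (j + k)) := by
      intro k
      exact Summable.of_norm_bounded (hgeo k) fun j => (hSn (j + k)).le
    set W : ℕ → E →L[ℝ] F := fun k => ∑' j : ℕ, S (j + k) with hWdef
    have hpartial : ∀ k, Tendsto (fun n => ∑ j ∈ Finset.range n, S (j + k)) atTop (𝓝 (W k)) :=
      fun k => (hsum k).hasSum.tendsto_sum_nat
    have hWmem : ∀ k, W k ∈ P := fun k =>
      hP.mem_of_tendsto (hpartial k)
        (Eventually.of_forall fun n => sum_mem fun j _ => hSP (j + k))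
    have hSpos : ∀ j, IsPosOp (S j) := fun j => isPosOp_of_admissible (hS1 j) (hS2 j)
    have hWnorm : ∀ k, ‖W k‖ ≤ 2 * (2 : ℝ)⁻¹ ^ k := by
      intro k
      have hsn : Summable (fun j : ℕ => ‖S (j + k)‖) :=
        Summable.of_nonneg_of_le (fun j => norm_nonneg _) (fun j => (hSn (j + k)).le) (hgeo k)
      have h1 : ‖W k‖ ≤ ∑' j : ℕ, ‖S (j + k)‖ := norm_tsum_le_tsum_norm hsn
      have h2 : ∑' j : ℕ, ‖S (j + k)‖ ≤ ∑' j : ℕ, (2 : ℝ)⁻¹ ^ (j + k) :=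
        Summable.tsum_le_tsum (fun j => (hSn (j + k)).le) hsn (hgeo k)
      have h3 : ∑' j : ℕ, (2 : ℝ)⁻¹ ^ (j + k) = 2 * (2 : ℝ)⁻¹ ^ k := by
        calc ∑' j : ℕ, (2 : ℝ)⁻¹ ^ (j + k) = ∑' j : ℕ, (2 : ℝ)⁻¹ ^ j * (2 : ℝ)⁻¹ ^ k := by
              simp [pow_add]
          _ = (∑' j : ℕ, (2 : ℝ)⁻¹ ^ j) * (2 : ℝ)⁻¹ ^ k := tsum_mul_right
          _ = 2 * (2 : ℝ)⁻¹ ^ k := by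
              rw [tsum_geometric_of_lt_one (by norm_num) (by norm_num)]
              norm_num
      linarith
    -- telescoping
    have htel : ∀ k m, ∑ j ∈ Finset.range m, (T (N (j + 1 + k)) - T (N (j + k)))
        = T (N (m + k)) - T (N k) := by
      intro k m
      have h := Finset.sum_range_sub (f := fun j => T (N (j + k))) m
      simpa using h
    have hterm2 : ∀ k j, IsPosOp (S (j + k) - (T (N (j + 1 + k)) - T (N (j + k)))) := by
      intro k j
      have h := hS2 (j + k)
      rwa [show j + k + 1 = j + 1 + k by omega] at h
    have hterm1 : ∀ k j, IsPosOp (S (j + k) + (T (N (j + 1 + k)) - T (N (j + k)))) := by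
      intro k j
      have h := hS1 (j + k)
      rw [show j + k + 1 = j + 1 + k by omega] at h
      exact h.congr (by module)
    have hNk : ∀ k, Tendsto (fun m => N (m + k)) atTop atTop :=
      fun k => hNmono.tendsto_atTop.comp (tendsto_add_atTop_nat k)
    have hTNk : ∀ k, Tendsto (fun m => T (N (m + k))) atTop (𝓝 L) :=
      fun k => hL.comp (hNk k)
    -- the two one-sided limits
    have hkeyA : ∀ k, IsPosOp (W k - (L - T (N k))) := by
      intro k
      have hAseq : Tendsto
          (fun m => (∑ j ∈ Finset.range m, S (j + k)) - (T (N (m + k)) - T (N k)))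
          atTop (𝓝 (W k - (L - T (N k)))) :=
        (hpartial k).sub ((hTNk k).sub tendsto_const_nhds)
      refine hposlim hAseq fun m => ?_
      have heq : (∑ j ∈ Finset.range m, S (j + k)) - (T (N (m + k)) - T (N k))
          = ∑ j ∈ Finset.range m, (S (j + k) - (T (N (j + 1 + k)) - T (N (j + k)))) := by
        rw [Finset.sum_sub_distrib, htel k m]
      exact (isPosOp_sum fun j _ => hterm2 k j).congr heq.symm
    have hkeyB : ∀ k, IsPosOp (W k + (L - T (N k))) := by
      intro k
      have hBseq : Tendsto
          (fun m => (∑ j ∈ Finset.range m, S (j + k)) + (T (N (m + k)) - T (N k)))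
          atTop (𝓝 (W k + (L - T (N k)))) :=
        (hpartial k).add ((hTNk k).sub tendsto_const_nhds)
      refine hposlim hBseq fun m => ?_
      have heq : (∑ j ∈ Finset.range m, S (j + k)) + (T (N (m + k)) - T (N k))
          = ∑ j ∈ Finset.range m, (S (j + k) + (T (N (j + 1 + k)) - T (N (j + k)))) := by
        rw [Finset.sum_add_distrib, htel k m]
      exact (isPosOp_sum fun j _ => hterm1 k j).congr heq.symm
    have hadmL : ∀ k, OpLE (-(W k)) (L - T (N k)) ∧ OpLE (L - T (N k)) (W k) := by
      intro k
      exact ⟨(hkeyB k).congr (by module), (hkeyA k).congr (by module)⟩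
    have henvk : ∀ k, envNorm (P : Set (E →L[ℝ] F)) (L - T (N k)) ≤ 2 * (2 : ℝ)⁻¹ ^ k := by
      intro k
      have hmem : ‖W k‖ ∈ eSet (P : Set (E →L[ℝ] F)) (L - T (N k)) :=
        ⟨W k, hWmem k, (hadmL k).1, (hadmL k).2, rfl⟩
      exact (csInf_le (eSet_bddBelow _ _) hmem).trans (hWnorm k)
    -- L is a regularly P-operator
    have hLreg : IsRegPOp (P : Set (E →L[ℝ] F)) L := by
      obtain ⟨A, B, hAP, hBP, pA, pB, hU0⟩ := hreg (N 0)
      have hDmem : L - T (N 0) ∈ P := P.sub_mem hLP (hTmem _)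
      refine ⟨A + (2⁻¹ : ℝ) • ((L - T (N 0)) + W 0), B + (2⁻¹ : ℝ) • (W 0 - (L - T (N 0))),
        P.add_mem hAP (P.smul_mem _ (P.add_mem hDmem (hWmem 0))),
        P.add_mem hBP (P.smul_mem _ (P.sub_mem (hWmem 0) hDmem)), ?_, ?_, ?_⟩
      · exact isPosOp_add pA (isPosOp_smul (by norm_num) ((hkeyB 0).congr (by module)))
      · exact isPosOp_add pB (isPosOp_smul (by norm_num) (hkeyA 0))
      · rw [hU0]
        module
    refine ⟨L, hLreg, ?_⟩
    -- convergence in the enveloping norm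
    rw [Metric.tendsto_atTop]
    intro ε hε
    obtain ⟨N', hN'⟩ := hC (ε / 2) (by linarith)
    obtain ⟨k0, hk0⟩ := exists_pow_lt_of_lt_one (show (0 : ℝ) < ε / 4 by linarith)
      (by norm_num : (2 : ℝ)⁻¹ < 1)
    set k := max k0 N' with hkdef
    have hk1 : (2 : ℝ)⁻¹ ^ k ≤ (2 : ℝ)⁻¹ ^ k0 :=
      pow_le_pow_of_le_one (by norm_num) (by norm_num) (le_max_left _ _)
    refine ⟨N', fun n hn => ?_⟩
    have hsplit : T n - L = (T n - T (N k)) + (T (N k) - L) := by module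
    have htri : envNorm (P : Set (E →L[ℝ] F)) (T n - L) ≤
        envNorm (P : Set (E →L[ℝ] F)) (T n - T (N k)) +
          envNorm (P : Set (E →L[ℝ] F)) (T (N k) - L) := by
      rw [hsplit]
      exact envNorm_add_le (hregsub n (N k)) ((hreg (N k)).sub hLreg)
    have h1 : envNorm (P : Set (E →L[ℝ] F)) (T n - T (N k)) < ε / 2 := by
      refine hN' n hn (N k) ?_
      exact le_trans (le_max_right k0 N') hNmono.le_apply
    have h2 : envNorm (P : Set (E →L[ℝ] F)) (T (N k) - L) ≤ 2 * (2 : ℝ)⁻¹ ^ k := by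
      have heq : T (N k) - L = -(L - T (N k)) := by module
      rw [heq, envNorm_neg]
      exact henvk k
    have h3 : (2 : ℝ) * (2 : ℝ)⁻¹ ^ k < ε / 2 := by
      have := hk1.trans_lt hk0
      linarith
    have hnn : 0 ≤ envNorm (P : Set (E →L[ℝ] F)) (T n - L) := envNorm_nonneg _ _
    rw [Real.dist_eq, sub_zero, abs_of_nonneg hnn]
    linarith
end

section
/- Let F have order continuous norm and let (S_k) be a sequence of positive order continuous operators from E to F with Σ‖S_k‖ < ∞. Then the operator-norm sum Q = Σ_{k=1}^∞ S_k is a positive order continuous operator. -/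
open Filter Topology

variable {E F : Type*}
  [NormedAddCommGroup E] [Lattice E] [HasSolidNorm E] [IsOrderedAddMonoid E] [NormedSpace ℝ E] [CompleteSpace E]
  [NormedAddCommGroup F] [Lattice F] [HasSolidNorm F] [IsOrderedAddMonoid F] [NormedSpace ℝ F] [CompleteSpace F]

/-- A (positive) operator `S` is order continuous if it carries downward-directed sets
with infimum `0` to sets with infimum `0`. -/
def IsOrderCont (S : E →L[ℝ] F) : Prop :=
  ∀ A : Set E, A.Nonempty → DirectedOn (· ≥ ·) A → IsGLB A 0 →
    IsGLB (S '' A) 0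

/-- If `F` has order continuous norm and `(S_k)` is a sequence of positive order
continuous operators with `Σ ‖S_k‖ < ∞`, then the operator-norm sum `Q = Σ S_k` is a
positive order continuous operator. -/
theorem sum_of_pos_orderCont_is_orderCont
    (hF : ∀ A : Set F, A.Nonempty → DirectedOn (· ≥ ·) A → IsGLB A 0 →
      ∀ ε : ℝ, 0 < ε → ∃ y ∈ A, ∀ z ∈ A, z ≤ y → ‖z‖ < ε)
    (S : ℕ → E →L[ℝ] F) (hpos : ∀ k, IsPosOp (S k)) (hoc : ∀ k, IsOrderCont (S k))
    (hsum : Summable fun k => ‖S k‖) :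
    ∃ Q : E →L[ℝ] F, HasSum S Q ∧ IsPosOp Q ∧ IsOrderCont Q := by
  have hS : Summable S := Summable.of_norm hsum
  obtain ⟨Q, hQ⟩ : ∃ Q : E →L[ℝ] F, HasSum S Q := ⟨_, hS.hasSum⟩
  refine ⟨Q, hQ, ?_, ?_⟩
  · -- positivity
    intro x hx
    exact hasSum_le (fun k => hpos k x hx) hasSum_zero
      ((ContinuousLinearMap.apply ℝ F x).hasSum hQ)
  have hQx : ∀ x : E, HasSum (fun k => S k x) (Q x) :=
    fun x => (ContinuousLinearMap.apply ℝ F x).hasSum hQ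
  have hQpos : ∀ x : E, 0 ≤ x → 0 ≤ Q x := fun x hx =>
    hasSum_le (fun k => hpos k x hx) hasSum_zero (hQx x)
  have mono : ∀ k, ∀ x y : E, x ≤ y → S k x ≤ S k y := by
    intro k x y h
    have := hpos k (y - x) (sub_nonneg.mpr h)
    rw [map_sub] at this
    exact sub_nonneg.mp this
  intro A hAne hAdir hAglb
  obtain ⟨a₀, ha₀⟩ := hAne
  -- restrict to elements below a₀
  obtain ⟨A', hA'def⟩ : ∃ B : Set E, B = {a | a ∈ A ∧ a ≤ a₀} := ⟨_, rfl⟩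
  have hA'sub : A' ⊆ A := by rw [hA'def]; exact fun a ha => ha.1
  have ha₀' : a₀ ∈ A' := by rw [hA'def]; exact ⟨ha₀, le_rfl⟩
  have hA'ne : A'.Nonempty := ⟨a₀, ha₀'⟩
  have hA'dir : DirectedOn (· ≥ ·) A' := by
    rw [hA'def]
    rintro a ⟨haA, ha⟩ b ⟨hbA, hb⟩
    obtain ⟨c, hcA, hca, hcb⟩ := hAdir a haA b hbA
    exact ⟨c, ⟨hcA, hca.trans ha⟩, hca, hcb⟩
  have hA'glb : IsGLB A' 0 := by
    constructor
    · intro a ha; exact hAglb.1 (hA'sub ha)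
    · intro b hb
      refine hAglb.2 ?_
      intro a haA
      obtain ⟨c, hcA, hca₀, hca⟩ := hAdir a₀ ha₀ a haA
      exact (hb (by rw [hA'def]; exact ⟨hcA, hca₀⟩)).trans hca
  have hA'nonneg : ∀ a ∈ A', (0:E) ≤ a := fun a ha => hAglb.1 (hA'sub ha)
  have hA'norm : ∀ a ∈ A', ‖a‖ ≤ ‖a₀‖ := by
    intro a ha
    refine HasSolidNorm.solid ?_
    rw [abs_of_nonneg (hA'nonneg a ha), abs_of_nonneg (hA'nonneg a₀ ha₀')]
    rw [hA'def] at ha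
    exact ha.2
  -- the key claim
  have key : ∀ ε : ℝ, 0 < ε → ∃ a ∈ A', ‖Q a‖ < ε := by
    intro ε hε
    obtain ⟨δ, hδdef⟩ : ∃ x : ℝ, x = ε / (2 * (‖a₀‖ + 1)) := ⟨_, rfl⟩
    have ha₀pos : (0:ℝ) < ‖a₀‖ + 1 := by positivity
    have hδ : 0 < δ := by rw [hδdef]; positivity
    -- choose n with small tail
    obtain ⟨n, hn⟩ := (((tendsto_sum_nat_add fun k => ‖S k‖).eventually
      (gt_mem_nhds hδ)).exists)
    obtain ⟨ε', hε'def⟩ : ∃ x : ℝ, x = ε / (2 * ((n : ℝ) + 1)) := ⟨_, rfl⟩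
    have hε' : 0 < ε' := by rw [hε'def]; positivity
    -- find a ∈ A' making the first n terms small
    have main : ∀ m : ℕ, ∃ a ∈ A', ∀ k < m, ∀ c ∈ A', c ≤ a → ‖S k c‖ < ε' := by
      intro m
      induction m with
      | zero => exact ⟨a₀, ha₀', fun k hk => by omega⟩
      | succ m ih =>
        obtain ⟨a, haA', hIH⟩ := ih
        -- apply hF to the image of A' under S m
        have himne : (S m '' A').Nonempty := ⟨S m a₀, a₀, ha₀', rfl⟩
        have himdir : DirectedOn (· ≥ ·) (S m '' A') := by
          rintro _ ⟨x, hx, rfl⟩ _ ⟨y, hy, rfl⟩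
          obtain ⟨c, hc, hcx, hcy⟩ := hA'dir x hx y hy
          exact ⟨S m c, ⟨c, hc, rfl⟩, mono m c x hcx, mono m c y hcy⟩
        have himglb : IsGLB (S m '' A') 0 := hoc m A' hA'ne hA'dir hA'glb
        obtain ⟨y, ⟨am, hamA', rfl⟩, hy⟩ := hF (S m '' A') himne himdir himglb ε' hε'
        obtain ⟨c, hcA', hca, hcam⟩ := hA'dir a haA' am hamA'
        refine ⟨c, hcA', ?_⟩
        intro k hk d hdA' hdc
        rcases Nat.lt_succ_iff_lt_or_eq.mp hk with hk' | rfl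
        · exact hIH k hk' d hdA' (hdc.trans hca)
        · exact hy (S k d) ⟨d, hdA', rfl⟩ (mono k d am (hdc.trans hcam))
    obtain ⟨a, haA', ha⟩ := main n
    refine ⟨a, haA', ?_⟩
    -- split Q a into head and tail
    have hsumm : Summable fun k => S k a := (hQx a).summable
    have hsplit : (∑ k ∈ Finset.range n, S k a) + ∑' k, S (k + n) a = Q a := by
      rw [Summable.sum_add_tsum_nat_add n hsumm, (hQx a).tsum_eq]
    have htail_norm : ‖∑' k, S (k + n) a‖ ≤ (∑' k, ‖S (k + n)‖) * ‖a‖ := by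
      have h1 : ∀ k, ‖S (k + n) a‖ ≤ ‖S (k + n)‖ * ‖a‖ :=
        fun k => (S (k + n)).le_opNorm a
      have hs2 : Summable fun k => ‖S (k + n)‖ * ‖a‖ :=
        ((summable_nat_add_iff n).mpr hsum).mul_right _
      calc ‖∑' k, S (k + n) a‖ ≤ ∑' k, ‖S (k + n) a‖ :=
            norm_tsum_le_tsum_norm (hs2.of_nonneg_of_le (fun k => norm_nonneg _) h1)
        _ ≤ ∑' k, ‖S (k + n)‖ * ‖a‖ :=
            Summable.tsum_le_tsum h1 (hs2.of_nonneg_of_le (fun k => norm_nonneg _) h1) hs2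
        _ = (∑' k, ‖S (k + n)‖) * ‖a‖ := by rw [tsum_mul_right]
    have hanorm : ‖a‖ ≤ ‖a₀‖ := hA'norm a haA'
    have htail : ‖∑' k, S (k + n) a‖ < ε / 2 := by
      have h0 : (0:ℝ) ≤ ‖a‖ := norm_nonneg _
      have h1 : (∑' k, ‖S (k + n)‖) * ‖a‖ < δ * (‖a₀‖ + 1) := by
        have htnn : (0:ℝ) ≤ ∑' k, ‖S (k + n)‖ :=
          tsum_nonneg fun k => norm_nonneg _
        nlinarith [hn, htnn, h0, hanorm, hδ, ha₀pos]
      have h2 : δ * (‖a₀‖ + 1) = ε / 2 := by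
        rw [hδdef]; field_simp
      calc ‖∑' k, S (k + n) a‖ ≤ (∑' k, ‖S (k + n)‖) * ‖a‖ := htail_norm
        _ < δ * (‖a₀‖ + 1) := h1
        _ = ε / 2 := h2
    have hhead : ‖∑ k ∈ Finset.range n, S k a‖ < ε / 2 := by
      calc ‖∑ k ∈ Finset.range n, S k a‖ ≤ ∑ k ∈ Finset.range n, ‖S k a‖ :=
            norm_sum_le _ _
        _ ≤ ∑ _k ∈ Finset.range n, ε' := by
            refine Finset.sum_le_sum ?_
            intro k hk
            exact (ha k (Finset.mem_range.mp hk) a haA' le_rfl).le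
        _ = n * ε' := by rw [Finset.sum_const, Finset.card_range]; ring
        _ < ε / 2 := by
            have hn1 : (0:ℝ) < (n:ℝ) + 1 := by positivity
            have heq : (n:ℝ) * ε' = ε / 2 * ((n:ℝ) / ((n:ℝ) + 1)) := by
              rw [hε'def]; field_simp
            have hlt : (n:ℝ) / ((n:ℝ) + 1) < 1 := (div_lt_one hn1).mpr (by linarith)
            nlinarith [hε]
    calc ‖Q a‖ = ‖(∑ k ∈ Finset.range n, S k a) + ∑' k, S (k + n) a‖ := by rw [hsplit]
      _ ≤ ‖∑ k ∈ Finset.range n, S k a‖ + ‖∑' k, S (k + n) a‖ := norm_add_le _ _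
      _ < ε / 2 + ε / 2 := by linarith
      _ = ε := by ring
  -- conclude the GLB property
  constructor
  · rintro _ ⟨a, ha, rfl⟩
    exact hQpos a (hAglb.1 ha)
  · intro b hb
    have hbp : ∀ ε : ℝ, 0 < ε → ‖b⁺‖ < ε := by
      intro ε hε
      obtain ⟨a, haA', hQa⟩ := key ε hε
      have hba : b ≤ Q a := hb ⟨a, hA'sub haA', rfl⟩
      have hQann : 0 ≤ Q a := hQpos a (hAglb.1 (hA'sub haA'))
      have h1 : b⁺ ≤ Q a := by
        calc b⁺ ≤ (Q a)⁺ := posPart_mono hba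
          _ = Q a := posPart_eq_self.mpr hQann
      have h2 : ‖b⁺‖ ≤ ‖Q a‖ := by
        refine HasSolidNorm.solid ?_
        rw [abs_of_nonneg (posPart_nonneg b), abs_of_nonneg hQann]
        exact h1
      exact h2.trans_lt hQa
    have : b⁺ = 0 := by
      rw [← norm_eq_zero]
      by_contra h
      have h0 : 0 < ‖b⁺‖ := lt_of_le_of_ne (norm_nonneg _) (Ne.symm h)
      exact absurd (hbp _ h0) (lt_irrefl _)
    exact posPart_eq_zero.mp this
end

section
/- The space a-Lm(E,F) of almost limited operators is closed in L(E,F) with respect to the operator norm. -/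
open Filter Topology

variable {E F : Type*}
  [NormedAddCommGroup E] [Lattice E] [IsOrderedAddMonoid E] [HasSolidNorm E] [NormedSpace ℝ E] [CompleteSpace E]
  [NormedAddCommGroup F] [Lattice F] [IsOrderedAddMonoid F] [HasSolidNorm F] [NormedSpace ℝ F] [CompleteSpace F]

/-- The adjoint `T' : F' → E'` of an operator `T : E → F`. -/
def adjOp (T : E →L[ℝ] F) (f : F →L[ℝ] ℝ) : E →L[ℝ] ℝ := f.comp T

/-- A sequence in the dual of `F` is weak*-null. -/
def WStarNull (f : ℕ → F →L[ℝ] ℝ) : Prop :=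
  ∀ y : F, Tendsto (fun n => f n y) atTop (𝓝 0)

/-- The value `|f|(y)` of the modulus of a functional `f ∈ F'` at `y ≥ 0`, given by the
Riesz–Kantorovich formula `|f|(y) = sup {f x : |x| ≤ y}`. -/
noncomputable def dualAbsAt (f : F →L[ℝ] ℝ) (y : F) : ℝ :=
  sSup {c : ℝ | ∃ x : F, |x| ≤ y ∧ c = f x}

/-- Two functionals `f, g ∈ F'` are disjoint: `|f| ∧ |g| = 0`, via the
Riesz–Kantorovich formula `(|f| ∧ |g|)(y) = inf {|f|(u) + |g|(v) : u, v ≥ 0, u + v = y}`. -/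
def DualDisjoint (f g : F →L[ℝ] ℝ) : Prop :=
  ∀ y : F, 0 ≤ y →
    sInf {c : ℝ | ∃ u v : F, 0 ≤ u ∧ 0 ≤ v ∧ u + v = y ∧
      c = dualAbsAt f u + dualAbsAt g v} = 0

/-- The space of almost limited operators (`T'` maps disjoint weak*-null sequences of
`F'` to norm-null sequences of `E'`) is closed in `L(E,F)` in the operator norm. -/
theorem almostLimited_isClosed :
    IsClosed {T : E →L[ℝ] F | ∀ f : ℕ → F →L[ℝ] ℝ,
      (∀ n m, n ≠ m → DualDisjoint (f n) (f m)) → WStarNull f →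
      Tendsto (fun n => ‖adjOp T (f n)‖) atTop (𝓝 0)} := by
  apply IsSeqClosed.isClosed
  intro S T hS hST f hdisj hw
  -- the sequence f is norm-bounded by Banach–Steinhaus
  obtain ⟨M, hM⟩ : ∃ M, ∀ n, ‖f n‖ ≤ M := by
    apply banach_steinhaus
    intro y
    obtain ⟨C, hC⟩ := ((hw y).norm.bddAbove_range)
    exact ⟨C, fun n => hC ⟨n, rfl⟩⟩
  rw [Metric.tendsto_atTop]
  intro ε hε
  -- choose k with ‖S k - T‖ small
  have hM0 : (0:ℝ) ≤ M := le_trans (norm_nonneg _) (hM 0)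
  obtain ⟨k, hk⟩ := (Metric.tendsto_atTop.mp hST) (ε / 2 / (M + 1))
    (by positivity)
  have hk' : ‖S k - T‖ < ε / 2 / (M + 1) := by
    simpa [dist_eq_norm] using hk k le_rfl
  obtain ⟨N, hN⟩ := (Metric.tendsto_atTop.mp (hS k f hdisj hw)) (ε / 2) (by positivity)
  refine ⟨N, fun n hn => ?_⟩
  have h1 : ‖adjOp T (f n) - adjOp (S k) (f n)‖ ≤ ‖f n‖ * ‖T - S k‖ := by
    have : adjOp T (f n) - adjOp (S k) (f n) = (f n).comp (T - S k) := by
      ext x; simp [adjOp, map_sub]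
    rw [this]
    exact (f n).opNorm_comp_le _
  have h2 : ‖f n‖ * ‖T - S k‖ < ε / 2 := by
    calc ‖f n‖ * ‖T - S k‖ ≤ (M + 1) * ‖T - S k‖ := by
          apply mul_le_mul_of_nonneg_right _ (norm_nonneg _)
          linarith [hM n]
      _ < (M + 1) * (ε / 2 / (M + 1)) := by
          apply mul_lt_mul_of_pos_left _ (by positivity)
          rwa [norm_sub_rev]
      _ = ε / 2 := by field_simp
  have h3 : ‖adjOp (S k) (f n)‖ < ε / 2 := by
    have := hN n hn
    rwa [Real.dist_eq, sub_zero, abs_of_nonneg (norm_nonneg _)] at this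
  rw [Real.dist_eq, sub_zero, abs_of_nonneg (norm_nonneg _)]
  calc ‖adjOp T (f n)‖ = ‖(adjOp T (f n) - adjOp (S k) (f n)) + adjOp (S k) (f n)‖ := by
        rw [sub_add_cancel]
    _ ≤ ‖adjOp T (f n) - adjOp (S k) (f n)‖ + ‖adjOp (S k) (f n)‖ := norm_add_le _ _
    _ < ε / 2 + ε / 2 := add_lt_add (lt_of_le_of_lt h1 h2) h3
    _ = ε := by ring
end

section
/- The space a-G(E,F) of almost Grothendieck operators is closed in L(E,F) with respect to the operator norm. -/
open Filter Topology

variable {E F : Type*}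
  [NormedAddCommGroup E] [Lattice E] [HasSolidNorm E] [IsOrderedAddMonoid E] [NormedSpace ℝ E] [CompleteSpace E]
  [NormedAddCommGroup F] [Lattice F] [HasSolidNorm F] [IsOrderedAddMonoid F] [NormedSpace ℝ F] [CompleteSpace F]

/-- A sequence in the dual of `E` is weakly null (tested against all of `E''`). -/
def WNullDual (g : ℕ → E →L[ℝ] ℝ) : Prop :=
  ∀ G : (E →L[ℝ] ℝ) →L[ℝ] ℝ, Tendsto (fun n => G (g n)) atTop (𝓝 0)

/-- The space of almost Grothendieck operators (`T'` maps disjoint weak*-null sequences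
of `F'` to weakly null sequences of `E'`) is closed in `L(E,F)` in the operator norm. -/
theorem almostGrothendieck_isClosed :
    IsClosed {T : E →L[ℝ] F | ∀ f : ℕ → F →L[ℝ] ℝ,
      (∀ n m, n ≠ m → DualDisjoint (f n) (f m)) → WStarNull f →
      WNullDual (fun n => adjOp T (f n))} := by

  apply IsSeqClosed.isClosed
  intro Ts T hmem hlim f hdisj hwstar G
  -- the weak*-null sequence is norm bounded by Banach–Steinhaus
  obtain ⟨C, hC⟩ : ∃ C, ∀ n, ‖f n‖ ≤ C := by
    apply banach_steinhaus (g := f)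
    intro y
    obtain ⟨c, hc⟩ := (hwstar y).norm.bddAbove_range
    exact ⟨c, fun i => hc ⟨i, rfl⟩⟩
  have hC0 : (0:ℝ) ≤ C := le_trans (norm_nonneg _) (hC 0)
  rw [Metric.tendsto_atTop]
  intro ε hε
  have hδ : 0 < ε / 2 / ((C + 1) * (‖G‖ + 1)) := by positivity
  obtain ⟨N₁, hN₁⟩ := Metric.tendsto_atTop.mp hlim _ hδ
  have hk : ‖T - Ts N₁‖ < ε / 2 / ((C + 1) * (‖G‖ + 1)) := by
    have := hN₁ N₁ le_rfl
    rwa [dist_eq_norm, ← norm_neg, neg_sub] at this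
  obtain ⟨N₂, hN₂⟩ := Metric.tendsto_atTop.mp (hmem N₁ f hdisj hwstar G) (ε / 2) (by positivity)
  refine ⟨N₂, fun n hn => ?_⟩
  have h1 : dist (G (adjOp (Ts N₁) (f n))) 0 < ε / 2 := hN₂ n hn
  rw [dist_zero_right, Real.norm_eq_abs] at h1 ⊢
  have hsplit : adjOp T (f n) = adjOp (Ts N₁) (f n) + (f n).comp (T - Ts N₁) := by
    simp [adjOp, ContinuousLinearMap.comp_sub]
  have hbound : |G ((f n).comp (T - Ts N₁))| ≤ ‖G‖ * (C * ‖T - Ts N₁‖) := by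
    calc |G ((f n).comp (T - Ts N₁))| ≤ ‖G‖ * ‖(f n).comp (T - Ts N₁)‖ := by
          simpa [Real.norm_eq_abs] using G.le_opNorm ((f n).comp (T - Ts N₁))
      _ ≤ ‖G‖ * (C * ‖T - Ts N₁‖) := by
          gcongr
          exact ((f n).opNorm_comp_le _).trans (by gcongr; exact hC n)
  have h2 : ‖G‖ * (C * ‖T - Ts N₁‖) < ε / 2 := by
    have h3 : ‖G‖ * C < (C + 1) * (‖G‖ + 1) := by nlinarith [norm_nonneg G]
    have h4 : ‖G‖ * (C * ‖T - Ts N₁‖) ≤ (C + 1) * (‖G‖ + 1) * ‖T - Ts N₁‖ := by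
      nlinarith [norm_nonneg (T - Ts N₁), norm_nonneg G]
    calc ‖G‖ * (C * ‖T - Ts N₁‖) ≤ (C + 1) * (‖G‖ + 1) * ‖T - Ts N₁‖ := h4
      _ < (C + 1) * (‖G‖ + 1) * (ε / 2 / ((C + 1) * (‖G‖ + 1))) := by gcongr
      _ = ε / 2 := by field_simp
  calc |G (adjOp T (f n))|
      = |G (adjOp (Ts N₁) (f n)) + G ((f n).comp (T - Ts N₁))| := by rw [hsplit, map_add]
    _ ≤ |G (adjOp (Ts N₁) (f n))| + |G ((f n).comp (T - Ts N₁))| := abs_add_le _ _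
    _ < ε / 2 + ε / 2 := add_lt_add_of_lt_of_le h1 (le_of_lt (lt_of_le_of_lt hbound h2))
    _ = ε := by ring
end
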